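/- arXiv:math/0204115 — 11 statements merged into one kernel-verified Lean document; each statement's English description precedes it below -/
import Mathlib

section
/- Let m/n ∈ (0,1/2) be in lowest terms, with right Farey parent p/q. For r,s ∈ ℤ/nℤ let O[r,s] denote the set {r + jm mod n : 0 ≤ j ≤ k}, where k ≥ 0 is least with r + km ≡ s (mod n). Then the cardinality of O[m, n-1] equals q, and the cardinality of O[m-1, 0] equals n - q. -/
/-- #O[m,n-1] = q and #O[m-1,0] = n - q, where p/q = RFP(m/n). -/
theorem card_orbit_segments (m n p q : ℕ)
    (hm : 0 < m) (hn : 2 * m < n) (hmn : Nat.Coprime m n)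
    (hq0 : 0 < q) (hqn : q < n) (hpq : Nat.Coprime p q)
    (heq : (q : ℤ) * m = (n : ℤ) * p - 1)
    (hlt : (m : ℚ) / n < (p : ℚ) / q) (hle : (p : ℚ) / q ≤ 1 / 2)
    (κ₁ κ₂ : ℕ)
    (h1 : ((m + κ₁ * m : ℕ) : ZMod n) = ((n - 1 : ℕ) : ZMod n))
    (h1min : ∀ j < κ₁, ((m + j * m : ℕ) : ZMod n) ≠ ((n - 1 : ℕ) : ZMod n))
    (h2 : ((m - 1 + κ₂ * m : ℕ) : ZMod n) = 0)
    (h2min : ∀ j < κ₂, ((m - 1 + j * m : ℕ) : ZMod n) ≠ 0) :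
    ((Finset.range (κ₁ + 1)).image (fun j => ((m + j * m : ℕ) : ZMod n))).card = q ∧
    ((Finset.range (κ₂ + 1)).image (fun j => ((m - 1 + j * m : ℕ) : ZMod n))).card = n - q := by
  have hn0 : 0 < n := by omega
  haveI : NeZero n := ⟨by omega⟩
  have hmu : IsUnit (m : ZMod n) := (ZMod.isUnit_iff_coprime m n).mpr hmn
  -- cancellation lemma
  have hcancel : ∀ a b : ℕ, a < n → b < n →
      ((a * m : ℕ) : ZMod n) = ((b * m : ℕ) : ZMod n) → a = b := by
    intro a b ha hb h
    push_cast at h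
    have h2' : (a : ZMod n) = (b : ZMod n) := hmu.mul_right_cancel h
    have := congrArg ZMod.val h2'
    rwa [ZMod.val_cast_of_lt ha, ZMod.val_cast_of_lt hb] at this
  -- q*m ≡ -1
  have hq1 : ((q * m : ℕ) : ZMod n) = -1 := by
    have hz : ((q * m : ℕ) : ℤ) = (n : ℤ) * p - 1 := by push_cast; linarith [heq]
    have := congrArg (Int.cast : ℤ → ZMod n) hz
    push_cast at this
    rw [ZMod.natCast_self] at this
    push_cast
    linear_combination this
  -- (n-1) ≡ -1
  have hn1 : ((n - 1 : ℕ) : ZMod n) = -1 := by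
    rw [Nat.cast_sub hn0, ZMod.natCast_self, Nat.cast_one]
    ring
  -- (n-q)*m ≡ 1
  have hq2 : (((n - q) * m : ℕ) : ZMod n) = 1 := by
    have e : (n - q) * m + q * m = n * m := by
      have h' : (n - q) + q = n := by omega
      calc (n - q) * m + q * m = ((n - q) + q) * m := by ring
        _ = n * m := by rw [h']
    have h0 : (((n - q) * m : ℕ) : ZMod n) + ((q * m : ℕ) : ZMod n)
        = ((n * m : ℕ) : ZMod n) := by rw [← Nat.cast_add, e]
    have hz : ((n * m : ℕ) : ZMod n) = 0 := by
      rw [Nat.cast_mul, ZMod.natCast_self, zero_mul]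
    rw [hq1, hz] at h0
    linear_combination h0
  -- rewrite m + t*m
  have e1 : ∀ t : ℕ, ((m + t * m : ℕ) : ZMod n) = (((t + 1) * m : ℕ) : ZMod n) := by
    intro t; congr 1; ring
  -- rewrite m - 1 + t*m
  have e2 : ∀ t : ℕ, ((m - 1 + t * m : ℕ) : ZMod n) = (((t + 1) * m : ℕ) : ZMod n) - 1 := by
    intro t
    have hnat : m - 1 + t * m = (t + 1) * m - 1 := by
      have h' : (t + 1) * m = t * m + m := by ring
      omega
    rw [hnat, Nat.cast_sub (by nlinarith : 1 ≤ (t + 1) * m), Nat.cast_one]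
  -- κ₁ = q - 1
  have hκ₁ : κ₁ = q - 1 := by
    rcases lt_trichotomy κ₁ (q - 1) with h | h | h
    · exfalso
      rw [e1, hn1, ← hq1] at h1
      have := hcancel (κ₁ + 1) q (by omega) (by omega) h1
      omega
    · exact h
    · exfalso
      apply h1min (q - 1) h
      rw [e1, hn1, ← hq1]
      congr 2
      omega
  -- κ₂ = n - q - 1
  have hκ₂ : κ₂ = n - q - 1 := by
    rcases lt_trichotomy κ₂ (n - q - 1) with h | h | h
    · exfalso
      rw [e2, ← hq2] at h2
      have h2' : (((κ₂ + 1) * m : ℕ) : ZMod n) = (((n - q) * m : ℕ) : ZMod n) := by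
        linear_combination h2
      have := hcancel (κ₂ + 1) (n - q) (by omega) (by omega) h2'
      omega
    · exact h
    · exfalso
      apply h2min (n - q - 1) h
      rw [e2]
      have h' : (n - q - 1) + 1 = n - q := by omega
      rw [h', hq2]
      ring
  constructor
  · have inj : Set.InjOn (fun j => ((m + j * m : ℕ) : ZMod n))
        (Finset.range (κ₁ + 1)) := by
      intro i hi j hj hij
      simp only [Finset.coe_range, Set.mem_Iio] at hi hj
      simp only at hij
      rw [e1 i, e1 j] at hij
      have := hcancel (i + 1) (j + 1) (by omega) (by omega) hij
      omega
    rw [Finset.card_image_of_injOn inj, Finset.card_range]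
    omega
  · have inj : Set.InjOn (fun j => ((m - 1 + j * m : ℕ) : ZMod n))
        (Finset.range (κ₂ + 1)) := by
      intro i hi j hj hij
      simp only [Finset.coe_range, Set.mem_Iio] at hi hj
      simp only at hij
      rw [e2 i, e2 j] at hij
      have hij' : (((i + 1) * m : ℕ) : ZMod n) = (((j + 1) * m : ℕ) : ZMod n) := by
        linear_combination hij
      have := hcancel (i + 1) (j + 1) (by omega) (by omega) hij'
      omega
    rw [Finset.card_image_of_injOn inj, Finset.card_range]
    omega
end

section
/- Let m/n ∈ (0,1/2) be in lowest terms with right Farey parent p/q. Then the number of elements of O[m,n-1] = {m + jm mod n : 0 ≤ j < q} that lie in the integer interval [1,m] equals p, and the number that lie in [n-m, n-1] also equals p. -/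
private lemma count_aux1 (m n p q : ℕ) (hm : 0 < m) (hn : 2 * m < n) (hq0 : 0 < q)
    (heqN : q * m + 1 = n * p) :
    ((Finset.range q).filter (fun j => 1 ≤ (m + j * m) % n ∧ (m + j * m) % n ≤ m)).card = p := by
  have hn0 : 0 < n := by omega
  have heq' : (q : ℤ) * m + 1 = n * p := by exact_mod_cast heqN
  rw [← Finset.card_range p]
  refine Finset.card_bij' (fun j _ => (m + j * m) / n) (fun k _ => k * n / m) ?_ ?_ ?_ ?_
  · intro j hj
    simp only [Finset.mem_filter, Finset.mem_range] at hj ⊢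
    obtain ⟨hjq, hr1, hr2⟩ := hj
    set k := (m + j * m) / n with hkdef
    set r := (m + j * m) % n with hrdef
    have hdm : n * k + r = m + j * m := Nat.div_add_mod _ _
    have hdm' : (n : ℤ) * k + r = m + j * m := by exact_mod_cast hdm
    have hr1' : (1 : ℤ) ≤ r := by exact_mod_cast hr1
    have hjm : ((j : ℤ) + 1) * m ≤ (q : ℤ) * m := by
      have h : ((j : ℤ) + 1) ≤ q := by exact_mod_cast hjq
      exact mul_le_mul_of_nonneg_right h (by positivity)
    have hfin : (n : ℤ) * k < (n : ℤ) * p := by linarith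
    exact_mod_cast lt_of_mul_lt_mul_left hfin (by positivity)
  · intro k hk
    simp only [Finset.mem_range] at hk
    simp only [Finset.mem_filter, Finset.mem_range]
    set j := k * n / m with hjdef
    set r := k * n % m with hrdef
    have hdm : m * j + r = k * n := Nat.div_add_mod _ _
    have hmod : r < m := Nat.mod_lt _ hm
    have hdm' : (m : ℤ) * j + r = k * n := by exact_mod_cast hdm
    have hmod' : (r : ℤ) < m := by exact_mod_cast hmod
    have hkp : ((k : ℤ) + 1) * n ≤ (p : ℤ) * n := by
      have h : ((k : ℤ) + 1) ≤ p := by exact_mod_cast hk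
      exact mul_le_mul_of_nonneg_right h (by positivity)
    set s := m - r with hsdef
    have hs' : (s : ℤ) = (m : ℤ) - r := by
      rw [hsdef]; exact_mod_cast Int.ofNat_sub hmod.le
    have hE : m + j * m = s + k * n := by
      have : (m : ℤ) + j * m = s + k * n := by rw [hs']; linarith
      exact_mod_cast this
    have hslt : s < n := lt_of_le_of_lt (Nat.sub_le _ _) (by omega)
    have hmodn : (m + j * m) % n = s := by
      rw [hE, Nat.add_mul_mod_self_right, Nat.mod_eq_of_lt hslt]
    have hs1 : 1 ≤ s := Nat.sub_pos_of_lt hmod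
    have hsm : s ≤ m := Nat.sub_le _ _
    refine ⟨?_, by rw [hmodn]; exact hs1, by rw [hmodn]; exact hsm⟩
    have hjq : ((j : ℤ) + 1) * m ≤ (q : ℤ) * m := by rw [hs'] at *; linarith
    have h2 : (j : ℤ) + 1 ≤ q := le_of_mul_le_mul_right hjq (by exact_mod_cast hm)
    exact_mod_cast (show (j : ℤ) < q by linarith)
  · intro j hj
    simp only [Finset.mem_filter, Finset.mem_range] at hj
    obtain ⟨hjq, hr1, hr2⟩ := hj
    show (m + j * m) / n * n / m = j
    set k := (m + j * m) / n with hkdef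
    set r := (m + j * m) % n with hrdef
    have hdm : n * k + r = m + j * m := Nat.div_add_mod _ _
    have hdm' : (n : ℤ) * k + r = m + j * m := by exact_mod_cast hdm
    have hr1' : (1 : ℤ) ≤ r := by exact_mod_cast hr1
    have hr2' : (r : ℤ) ≤ m := by exact_mod_cast hr2
    have lo : j * m ≤ k * n := by
      have : (j : ℤ) * m ≤ k * n := by linarith
      exact_mod_cast this
    have hi : k * n < (j + 1) * m := by
      have : (k : ℤ) * n < ((j : ℤ) + 1) * m := by linarith
      exact_mod_cast this
    exact Nat.div_eq_of_lt_le lo hi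
  · intro k hk
    simp only [Finset.mem_range] at hk
    show (m + k * n / m * m) / n = k
    set j := k * n / m with hjdef
    set r := k * n % m with hrdef
    have hdm : m * j + r = k * n := Nat.div_add_mod _ _
    have hmod : r < m := Nat.mod_lt _ hm
    have hdm' : (m : ℤ) * j + r = k * n := by exact_mod_cast hdm
    have hmod' : (r : ℤ) < m := by exact_mod_cast hmod
    have lo : k * n ≤ m + j * m := by
      have : (k : ℤ) * n ≤ m + j * m := by linarith
      exact_mod_cast this
    have hi : m + j * m < (k + 1) * n := by
      have : (m : ℤ) + j * m < ((k : ℤ) + 1) * n := by linarith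
      exact_mod_cast this
    exact Nat.div_eq_of_lt_le lo hi

private lemma count_aux2 (m n p q : ℕ) (hm : 0 < m) (hn : 2 * m < n) (hq0 : 0 < q)
    (heqN : q * m + 1 = n * p) :
    ((Finset.range q).filter
      (fun j => n - m ≤ (m + j * m) % n ∧ (m + j * m) % n ≤ n - 1)).card = p := by
  have hn0 : 0 < n := by omega
  have hmn : m ≤ n := by omega
  have hn1 : 1 ≤ n := hn0
  have heq' : (q : ℤ) * m + 1 = n * p := by exact_mod_cast heqN
  rw [← Finset.card_range p]
  refine Finset.card_bij' (fun j _ => (m + j * m) / n)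
    (fun k _ => ((k + 1) * n - 1) / m - 1) ?_ ?_ ?_ ?_
  · intro j hj
    simp only [Finset.mem_filter, Finset.mem_range] at hj ⊢
    obtain ⟨hjq, hr1, hr2⟩ := hj
    set k := (m + j * m) / n with hkdef
    set r := (m + j * m) % n with hrdef
    have hdm : n * k + r = m + j * m := Nat.div_add_mod _ _
    have hdm' : (n : ℤ) * k + r = m + j * m := by exact_mod_cast hdm
    have hr1' : (n : ℤ) - m ≤ r := by
      have : ((n - m : ℕ) : ℤ) ≤ r := by exact_mod_cast hr1
      rwa [Int.ofNat_sub hmn] at this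
    have hjm : ((j : ℤ) + 1) * m ≤ (q : ℤ) * m := by
      have h : ((j : ℤ) + 1) ≤ q := by exact_mod_cast hjq
      exact mul_le_mul_of_nonneg_right h (by positivity)
    have hmn' : (m : ℤ) < n := by exact_mod_cast (by omega : m < n)
    have hfin : (n : ℤ) * k < (n : ℤ) * p := by linarith
    exact_mod_cast lt_of_mul_lt_mul_left hfin (by positivity)
  · intro k hk
    simp only [Finset.mem_range] at hk
    simp only [Finset.mem_filter, Finset.mem_range]
    have h1 : 1 ≤ (k + 1) * n := Nat.one_le_iff_ne_zero.mpr (by positivity)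
    set N := (k + 1) * n - 1 with hNdef
    set t := N / m with htdef
    set r2 := N % m with hr2def
    have hdm : m * t + r2 = N := Nat.div_add_mod _ _
    have hmod : r2 < m := Nat.mod_lt _ hm
    have hN' : (N : ℤ) = ((k : ℤ) + 1) * n - 1 := by
      rw [hNdef, Int.ofNat_sub h1]; push_cast; ring
    have hdm' : (m : ℤ) * t + r2 = N := by exact_mod_cast hdm
    have hmod' : (r2 : ℤ) < m := by exact_mod_cast hmod
    have hkp : ((k : ℤ) + 1) * n ≤ (p : ℤ) * n := by
      have h : ((k : ℤ) + 1) ≤ p := by exact_mod_cast hk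
      exact mul_le_mul_of_nonneg_right h (by positivity)
    have hkn' : (0 : ℤ) ≤ (k : ℤ) * n := by positivity
    have hn' : 2 * (m : ℤ) < n := by exact_mod_cast hn
    have ht1 : 1 ≤ t := by
      have h : (m : ℤ) * 1 < m * t := by linarith
      have := lt_of_mul_lt_mul_left h (by positivity : (0:ℤ) ≤ m)
      exact_mod_cast this.le
    have hjt : (t - 1) + 1 = t := Nat.sub_add_cancel ht1
    have htm : m + (t - 1) * m = t * m := by
      calc m + (t - 1) * m = ((t - 1) + 1) * m := by ring
        _ = t * m := by rw [hjt]
    have hklentm : k * n ≤ t * m := by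
      have : (k : ℤ) * n ≤ t * m := by linarith
      exact_mod_cast this
    set s := t * m - k * n with hsdef
    have hs' : (s : ℤ) = (t : ℤ) * m - k * n := by
      rw [hsdef]; exact_mod_cast Int.ofNat_sub hklentm
    have hsub : (s : ℤ) = (n : ℤ) - 1 - r2 := by rw [hs']; linarith
    have hslt : s < n := by
      have : (s : ℤ) < n := by rw [hsub]; linarith
      exact_mod_cast this
    have hE : m + (t - 1) * m = s + k * n := by
      rw [htm]
      have : (t : ℤ) * m = s + k * n := by rw [hs']; ring
      exact_mod_cast this
    have hmodn : (m + (t - 1) * m) % n = s := by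
      rw [hE, Nat.add_mul_mod_self_right, Nat.mod_eq_of_lt hslt]
    refine ⟨?_, ?_, ?_⟩
    · -- t - 1 < q
      have htq : (t : ℤ) * m ≤ (q : ℤ) * m := by linarith
      have h2 : (t : ℤ) ≤ q := le_of_mul_le_mul_right htq (by exact_mod_cast hm)
      have h3 : t ≤ q := by exact_mod_cast h2
      omega
    · rw [hmodn]
      have : ((n - m : ℕ) : ℤ) ≤ s := by
        rw [Int.ofNat_sub hmn, hsub]; linarith
      exact_mod_cast this
    · rw [hmodn]
      have : (s : ℤ) ≤ ((n - 1 : ℕ) : ℤ) := by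
        rw [Int.ofNat_sub hn1, hsub]
        have hr2nn : (0 : ℤ) ≤ (r2 : ℤ) := by positivity
        push_cast
        linarith
      exact_mod_cast this
  · intro j hj
    simp only [Finset.mem_filter, Finset.mem_range] at hj
    obtain ⟨hjq, hr1, hr2⟩ := hj
    show (((m + j * m) / n + 1) * n - 1) / m - 1 = j
    set k := (m + j * m) / n with hkdef
    set r := (m + j * m) % n with hrdef
    have hdm : n * k + r = m + j * m := Nat.div_add_mod _ _
    have hdm' : (n : ℤ) * k + r = m + j * m := by exact_mod_cast hdm
    have hr1' : (n : ℤ) - m ≤ r := by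
      have : ((n - m : ℕ) : ℤ) ≤ r := by exact_mod_cast hr1
      rwa [Int.ofNat_sub hmn] at this
    have hrn : r < n := by rw [hrdef]; exact Nat.mod_lt _ hn0
    have hrn' : (r : ℤ) < n := by exact_mod_cast hrn
    have h1 : 1 ≤ (k + 1) * n := Nat.one_le_iff_ne_zero.mpr (by positivity)
    have hcast : (((k + 1) * n - 1 : ℕ) : ℤ) = ((k : ℤ) + 1) * n - 1 := by
      rw [Int.ofNat_sub h1]; push_cast; ring
    have lo : (j + 1) * m ≤ (k + 1) * n - 1 := by
      have : ((j : ℤ) + 1) * m ≤ (((k + 1) * n - 1 : ℕ) : ℤ) := by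
        rw [hcast]; push_cast; linarith
      exact_mod_cast this
    have hi : (k + 1) * n - 1 < (j + 1 + 1) * m := by
      have : (((k + 1) * n - 1 : ℕ) : ℤ) < ((j : ℤ) + 1 + 1) * m := by
        rw [hcast]; push_cast; linarith
      exact_mod_cast this
    rw [Nat.div_eq_of_lt_le lo hi]
    omega
  · intro k hk
    simp only [Finset.mem_range] at hk
    show (m + (((k + 1) * n - 1) / m - 1) * m) / n = k
    have h1 : 1 ≤ (k + 1) * n := Nat.one_le_iff_ne_zero.mpr (by positivity)
    set N := (k + 1) * n - 1 with hNdef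
    set t := N / m with htdef
    set r2 := N % m with hr2def
    have hdm : m * t + r2 = N := Nat.div_add_mod _ _
    have hmod : r2 < m := Nat.mod_lt _ hm
    have hN' : (N : ℤ) = ((k : ℤ) + 1) * n - 1 := by
      rw [hNdef, Int.ofNat_sub h1]; push_cast; ring
    have hdm' : (m : ℤ) * t + r2 = N := by exact_mod_cast hdm
    have hmod' : (r2 : ℤ) < m := by exact_mod_cast hmod
    have hkn' : (0 : ℤ) ≤ (k : ℤ) * n := by positivity
    have hn' : 2 * (m : ℤ) < n := by exact_mod_cast hn
    have ht1 : 1 ≤ t := by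
      have h : (m : ℤ) * 1 < m * t := by linarith
      have := lt_of_mul_lt_mul_left h (by positivity : (0:ℤ) ≤ m)
      exact_mod_cast this.le
    have hjt : (t - 1) + 1 = t := Nat.sub_add_cancel ht1
    have htm : m + (t - 1) * m = t * m := by
      calc m + (t - 1) * m = ((t - 1) + 1) * m := by ring
        _ = t * m := by rw [hjt]
    have lo : k * n ≤ m + (t - 1) * m := by
      rw [htm]
      have : (k : ℤ) * n ≤ t * m := by linarith
      exact_mod_cast this
    have hi : m + (t - 1) * m < (k + 1) * n := by
      rw [htm]
      have : (t : ℤ) * m < ((k : ℤ) + 1) * n := by linarith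
      exact_mod_cast this
    exact Nat.div_eq_of_lt_le lo hi

/-- the number of elements of O[m,n-1] = {m + jm mod n : 0 ≤ j < q}
lying in [1,m] equals p, and the number lying in [n-m,n-1] equals p. -/
theorem orbit_in_intervals (m n p q : ℕ)
    (hm : 0 < m) (hn : 2 * m < n) (hmn : Nat.Coprime m n)
    (hq0 : 0 < q) (hqn : q < n) (hpq : Nat.Coprime p q)
    (heq : (q : ℤ) * m = (n : ℤ) * p - 1)
    (hlt : (m : ℚ) / n < (p : ℚ) / q) (hle : (p : ℚ) / q ≤ 1 / 2) :
    (((Finset.range q).image (fun j => ((m + j * m : ℕ) : ZMod n))).filter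
        (fun x => 1 ≤ x.val ∧ x.val ≤ m)).card = p ∧
    (((Finset.range q).image (fun j => ((m + j * m : ℕ) : ZMod n))).filter
        (fun x => n - m ≤ x.val ∧ x.val ≤ n - 1)).card = p := by
  haveI : NeZero n := ⟨by omega⟩
  have heqN : q * m + 1 = n * p := by
    have h2 : ((q * m + 1 : ℕ) : ℤ) = ((n * p : ℕ) : ℤ) := by push_cast; linarith
    exact_mod_cast h2
  have hinj : Set.InjOn (fun j => ((m + j * m : ℕ) : ZMod n)) (Finset.range q) := by
    have key : ∀ a b : ℕ, a < q → b < q → a ≤ b →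
        ((m + a * m : ℕ) : ZMod n) = ((m + b * m : ℕ) : ZMod n) → a = b := by
      intro a b ha hb hab heqv
      have hval := congrArg ZMod.val heqv
      rw [ZMod.val_natCast, ZMod.val_natCast] at hval
      have hle' : m + a * m ≤ m + b * m :=
        Nat.add_le_add_left (Nat.mul_le_mul_right m hab) m
      have hdvd : n ∣ (m + b * m) - (m + a * m) :=
        (Nat.modEq_iff_dvd' hle').mp hval
      rw [Nat.add_sub_add_left, ← Nat.sub_mul] at hdvd
      have hdvd2 : n ∣ (b - a) := hmn.symm.dvd_of_dvd_mul_right hdvd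
      have := Nat.eq_zero_of_dvd_of_lt hdvd2 (by omega : b - a < n)
      omega
    intro a ha b hb heqv
    simp only [Finset.coe_range, Set.mem_Iio] at ha hb
    rcases le_total a b with h | h
    · exact key a b ha hb h heqv
    · exact (key b a hb ha h heqv.symm).symm
  constructor
  · rw [Finset.filter_image,
      Finset.card_image_of_injOn (hinj.mono (Finset.coe_subset.mpr (Finset.filter_subset _ _)))]
    have := count_aux1 m n p q hm hn hq0 heqN
    rw [← this]
    congr 1
    apply Finset.filter_congr
    intro j _
    rw [ZMod.val_natCast]
  · rw [Finset.filter_image,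
      Finset.card_image_of_injOn (hinj.mono (Finset.coe_subset.mpr (Finset.filter_subset _ _)))]
    have := count_aux2 m n p q hm hn hq0 heqN
    rw [← this]
    congr 1
    apply Finset.filter_congr
    intro j _
    rw [ZMod.val_natCast]
end

section
/- Let u/v < p/q be Farey neighbours and ξ(r/s) = (rp + (s-r)u)/(rq + (s-r)v). If m/n ∈ (u/v, p/q) is in lowest terms, then ξ((vm - un)/((v-q)m + (p-u)n)) = m/n; moreover 0 < vm - un < (v-q)m + (p-u)n and gcd(vm - un, (v-q)m + (p-u)n) = 1. -/
/-- if m/n ∈ (u/v,p/q) is in lowest terms then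
ξ((vm-un)/((v-q)m+(p-u)n)) = m/n, with the stated positivity and coprimality. -/
theorem xi_preimage (u v p q m n : ℤ)
    (hv : 0 < v) (hq : 0 < q) (hn : 0 < n)
    (huv : Int.gcd u v = 1) (hpq : Int.gcd p q = 1) (hmn : Int.gcd m n = 1)
    (hfarey : p * v - q * u = 1)
    (h1 : (u : ℚ) / v < (m : ℚ) / n) (h2 : (m : ℚ) / n < (p : ℚ) / q) :
    0 < v * m - u * n ∧
    v * m - u * n < (v - q) * m + (p - u) * n ∧
    Int.gcd (v * m - u * n) ((v - q) * m + (p - u) * n) = 1 ∧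
    (((v * m - u * n) * p + (((v - q) * m + (p - u) * n) - (v * m - u * n)) * u : ℤ) : ℚ) /
      (((v * m - u * n) * q + (((v - q) * m + (p - u) * n) - (v * m - u * n)) * v : ℤ) : ℚ)
      = (m : ℚ) / n := by
  have hvQ : (0:ℚ) < (v:ℚ) := by exact_mod_cast hv
  have hqQ : (0:ℚ) < (q:ℚ) := by exact_mod_cast hq
  have hnQ : (0:ℚ) < (n:ℚ) := by exact_mod_cast hn
  rw [div_lt_div_iff₀ hvQ hnQ] at h1
  rw [div_lt_div_iff₀ hnQ hqQ] at h2
  have h1' : u * n < v * m := by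
    have : ((u*n:ℤ):ℚ) < ((v*m:ℤ):ℚ) := by push_cast; linarith
    exact_mod_cast this
  have h2' : q * m < p * n := by
    have : ((q*m:ℤ):ℚ) < ((p*n:ℤ):ℚ) := by push_cast; linarith
    exact_mod_cast this
  have hr : 0 < v * m - u * n := by linarith
  have hb : 0 < p * n - q * m := by linarith
  refine ⟨hr, by linarith, ?_, ?_⟩
  · obtain ⟨x, y, hxy⟩ := Int.isCoprime_iff_gcd_eq_one.mpr hmn
    refine Int.isCoprime_iff_gcd_eq_one.mp
      ⟨x*p + y*q - x*u - y*v, x*u + y*v, ?_⟩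
    linear_combination hxy + (x*m + y*n) * hfarey
  · have hN : (v * m - u * n) * p +
        (((v - q) * m + (p - u) * n) - (v * m - u * n)) * u = m := by
      linear_combination m * hfarey
    have hD : (v * m - u * n) * q +
        (((v - q) * m + (p - u) * n) - (v * m - u * n)) * v = n := by
      linear_combination n * hfarey
    rw [hN, hD]
end

section
/- Let u/v < p/q be Farey neighbours. If 0 < r/s < a/b < 1, then ξ(a/b) - ξ(r/s) = (as - br)/((aq + (b-a)v)(rq + (s-r)v)) > 0, where ξ(r/s) = (rp + (s-r)u)/(rq + (s-r)v). In particular ξ is strictly increasing. -/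
/-- the difference formula for ξ and strict monotonicity. -/
theorem xi_difference (u v p q r s a b : ℤ)
    (hv : 0 < v) (hq : 0 < q) (hs : 0 < s) (hb : 0 < b)
    (huv : Int.gcd u v = 1) (hpq : Int.gcd p q = 1)
    (hlt : (u : ℚ) / v < (p : ℚ) / q)
    (hfarey : p * v - q * u = 1)
    (h0 : 0 < (r : ℚ) / s) (h1 : (r : ℚ) / s < (a : ℚ) / b) (h2 : (a : ℚ) / b < 1) :
    ((a * p + (b - a) * u : ℤ) : ℚ) / ((a * q + (b - a) * v : ℤ) : ℚ) -
      ((r * p + (s - r) * u : ℤ) : ℚ) / ((r * q + (s - r) * v : ℤ) : ℚ)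
      = ((a * s - b * r : ℤ) : ℚ) / (((a * q + (b - a) * v) * (r * q + (s - r) * v) : ℤ) : ℚ) ∧
    0 < ((a * s - b * r : ℤ) : ℚ) / (((a * q + (b - a) * v) * (r * q + (s - r) * v) : ℤ) : ℚ) := by
  have hs' : (0:ℚ) < s := by exact_mod_cast hs
  have hb' : (0:ℚ) < b := by exact_mod_cast hb
  have hr' : (0:ℚ) < r := by rw [lt_div_iff₀ hs'] at h0; simpa using h0
  have ha' : (0:ℚ) < a := by
    have := h0.trans h1
    rw [lt_div_iff₀ hb'] at this; simpa using this
  have hab : (r:ℚ) * b < a * s := by rwa [div_lt_div_iff₀ hs' hb'] at h1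
  have haltb : (a:ℚ) < b := by rwa [div_lt_one hb'] at h2
  have hrlts : (r:ℚ) < s := by
    have := h1.trans h2
    rwa [div_lt_one hs'] at this
  have haZ : 0 < a := by exact_mod_cast ha'
  have hrZ : 0 < r := by exact_mod_cast hr'
  have haltbZ : a < b := by exact_mod_cast haltb
  have hrltsZ : r < s := by exact_mod_cast hrlts
  have habZ : r * b < a * s := by exact_mod_cast hab
  have d1 : 0 < a * q + (b - a) * v := by nlinarith
  have d2 : 0 < r * q + (s - r) * v := by nlinarith
  have d1' : (0:ℚ) < ((a * q + (b - a) * v : ℤ) : ℚ) := by exact_mod_cast d1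
  have d2' : (0:ℚ) < ((r * q + (s - r) * v : ℤ) : ℚ) := by exact_mod_cast d2
  have hnum : (0:ℚ) < ((a * s - b * r : ℤ) : ℚ) := by
    push_cast; nlinarith
  have hfareyQ : (p:ℚ) * v - q * u = 1 := by exact_mod_cast hfarey
  constructor
  · rw [div_sub_div _ _ (ne_of_gt d1') (ne_of_gt d2'), div_eq_div_iff (by positivity) (ne_of_gt (by exact_mod_cast mul_pos d1 d2))]
    push_cast
    linear_combination (((a:ℚ) * s - b * r) * ((a * q + (b - a) * v) * (r * q + (s - r) * v))) * hfareyQ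
  · apply div_pos hnum
    push_cast
    push_cast at d1' d2'
    positivity
end

section
/- For q = m/n ∈ (0,1/2] in lowest terms, with κᵢ defined by κ₁ = ⌊n/m⌋ - 1 and κᵢ = ⌊in/m⌋ - ⌊(i-1)n/m⌋ - 2 for 2 ≤ i ≤ m, the sequence (κᵢ) is palindromic: κᵢ = κ_{m+1-i} for all 1 ≤ i ≤ m. -/
lemma kappa_key (m n j : ℕ) (hmn : Nat.Coprime m n) (hj1 : 1 ≤ j) (hj2 : j < m) :
    j * n / m + (m - j) * n / m = n - 1 := by
  have hm : 0 < m := by omega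
  have hr0 : j * n % m ≠ 0 := by
    intro h
    have hd : m ∣ j * n := Nat.dvd_of_mod_eq_zero h
    have : m ∣ j := (Nat.Coprime.dvd_of_dvd_mul_right hmn) hd
    have := Nat.le_of_dvd (by omega) this
    omega
  have hs0 : (m - j) * n % m ≠ 0 := by
    intro h
    have hd : m ∣ (m - j) * n := Nat.dvd_of_mod_eq_zero h
    have : m ∣ (m - j) := (Nat.Coprime.dvd_of_dvd_mul_right hmn) hd
    have := Nat.le_of_dvd (by omega) this
    omega
  have hsum : j * n + (m - j) * n = m * n := by
    rw [← Nat.add_mul]; congr 1; omega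
  have hdvd : m ∣ (j * n % m + (m - j) * n % m) := by
    have h1 : (j * n % m + (m - j) * n % m) % m = (j * n + (m - j) * n) % m :=
      (Nat.add_mod _ _ _).symm.trans (by rw [Nat.add_mod])
    rw [hsum, Nat.mul_mod_right] at h1
    exact Nat.dvd_of_mod_eq_zero h1
  have hrlt : j * n % m < m := Nat.mod_lt _ hm
  have hslt : (m - j) * n % m < m := Nat.mod_lt _ hm
  have hle : m ≤ j * n % m + (m - j) * n % m := Nat.le_of_dvd (by omega) hdvd
  have hd2 : m ∣ (j * n % m + (m - j) * n % m - m) := Nat.dvd_sub hdvd dvd_rfl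
  have hz : j * n % m + (m - j) * n % m - m = 0 :=
    Nat.eq_zero_of_dvd_of_lt hd2 (by omega)
  have hmod : j * n % m + (m - j) * n % m = m := by omega
  have h1 := Nat.div_add_mod (j * n) m
  have h2 := Nat.div_add_mod ((m - j) * n) m
  have hmain : m * (j * n / m + (m - j) * n / m + 1) = m * n := by
    rw [Nat.mul_add, Nat.mul_add, Nat.mul_one]
    linarith
  have heq := Nat.eq_of_mul_eq_mul_left hm hmain
  have hn : 1 ≤ n := by
    rcases Nat.eq_zero_or_pos n with h | h
    · subst h; simp at hr0
    · exact h
  omega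

/-- the sequence (κᵢ) is palindromic: κᵢ = κ_{m+1-i} for 1 ≤ i ≤ m. -/
theorem kappa_palindromic (m n : ℕ) (hm : 0 < m) (hmn : Nat.Coprime m n) (h2 : 2 * m ≤ n)
    (κ : ℕ → ℤ)
    (hκ1 : κ 1 = ((n / m : ℕ) : ℤ) - 1)
    (hκ : ∀ i, 2 ≤ i → i ≤ m → κ i = ((i * n / m : ℕ) : ℤ) - ((i - 1) * n / m : ℕ) - 2) :
    ∀ i, 1 ≤ i → i ≤ m → κ i = κ (m + 1 - i) := by
  have hn1 : 1 ≤ n := by omega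
  -- end case: κ 1 = κ m for m ≥ 2
  have hend : 2 ≤ m → κ 1 = κ m := by
    intro hm2
    have hmm : m * n / m = n := Nat.mul_div_cancel_left n (by omega)
    have hk := hκ m hm2 (le_refl m)
    have hkey := kappa_key m n 1 hmn (le_refl 1) (by omega)
    rw [one_mul] at hkey
    rw [hκ1, hk, hmm]
    have e1 : n / m + (m - 1) * n / m = n - 1 := hkey
    generalize ha : n / m = a at e1 ⊢
    generalize hb : (m - 1) * n / m = b at e1 ⊢
    omega
  intro i hi1 him
  rcases Nat.eq_or_lt_of_le hi1 with h1 | h1'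
  · -- i = 1
    subst h1
    rw [show m + 1 - 1 = m from by omega]
    rcases Nat.eq_or_lt_of_le hm with hm1 | hm2
    · rw [← hm1]
    · exact hend hm2
  rcases Nat.eq_or_lt_of_le him with hlast | hmid
  · -- i = m
    subst hlast
    rw [show i + 1 - i = 1 from by omega]
    exact (hend (by omega)).symm
  · -- 2 ≤ i ≤ m - 1
    have hi2 : 2 ≤ i := h1'
    have him1 : i < m := hmid
    have hki := hκ i hi2 (le_of_lt him1)
    have hkj := hκ (m + 1 - i) (by omega) (by omega)
    have e1 : m + 1 - i - 1 = m - i := by omega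
    rw [e1] at hkj
    have key1 := kappa_key m n i hmn hi1 him1
    have key2 := kappa_key m n (i - 1) hmn (by omega) (by omega)
    have e2 : m - (i - 1) = m + 1 - i := by omega
    rw [e2] at key2
    rw [hki, hkj]
    generalize ha : i * n / m = a at key1 ⊢
    generalize hb : (m - i) * n / m = b at key1 ⊢
    generalize hc : (i - 1) * n / m = c at key2 ⊢
    generalize hd : (m + 1 - i) * n / m = d at key2 ⊢
    omega
end

section
/- Let m/n ∈ (0,1/2] be in lowest terms with m ≥ 2, and let κᵢ = ⌊in/m⌋ - ⌊(i-1)n/m⌋ - 2 for 2 ≤ i ≤ m, κ₁ = ⌊n/m⌋ - 1. Then for each r with 1 ≤ r ≤ m and each s with 1 ≤ s ≤ m + 1 - r, one has κᵣ + 1 + Σ_{i=r+1}^{r+s-1} κᵢ ≥ ⌊sn/m⌋ - (2s-1) = Σ_{i=1}^{s} κᵢ. -/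
/-!
Writing `f i = ⌊i n / m⌋`, the sums of consecutive `κᵢ` telescope: `∑_{i=a+1}^{b} κᵢ = f b - f a - 2 (b - a)`
for `1 ≤ a ≤ b ≤ m`, and `κ₁ = f 1 - f 0 - 1`. This gives the identity, and reduces the inequality to
the superadditivity `f (r - 1) + f s ≤ f (r + s - 1)` of the floor.
-/

open Finset

section Kappa

variable {m n : ℕ} {κ : ℕ → ℤ}

theorem sum_Ioc_kappa_eq
    (hκ : ∀ i, 2 ≤ i → i ≤ m → κ i = ((i * n / m : ℕ) : ℤ) - ((i - 1) * n / m : ℕ) - 2)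
    {a b : ℕ} (ha : 1 ≤ a) (hab : a ≤ b) (hbm : b ≤ m) :
    ∑ i ∈ Ioc a b, κ i = ((b * n / m : ℕ) : ℤ) - ((a * n / m : ℕ) : ℤ) - 2 * ((b : ℤ) - a) := by
  induction b, hab using Nat.le_induction with
  | base => simp
  | succ b hab ih =>
    rw [sum_Ioc_succ_top hab, ih (by omega), hκ (b + 1) (by omega) hbm, Nat.add_sub_cancel]
    push_cast
    ring

theorem kappa_ge (hκ1 : κ 1 = ((n / m : ℕ) : ℤ) - 1)
    (hκ : ∀ i, 2 ≤ i → i ≤ m → κ i = ((i * n / m : ℕ) : ℤ) - ((i - 1) * n / m : ℕ) - 2)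
    {r : ℕ} (hr1 : 1 ≤ r) (hrm : r ≤ m) :
    ((r * n / m : ℕ) : ℤ) - ((r - 1) * n / m : ℕ) - 2 ≤ κ r := by
  rcases hr1.eq_or_lt with rfl | hr2
  · simp [hκ1]
  · rw [hκ r hr2 hrm]

theorem sum_Icc_one_kappa_eq (hκ1 : κ 1 = ((n / m : ℕ) : ℤ) - 1)
    (hκ : ∀ i, 2 ≤ i → i ≤ m → κ i = ((i * n / m : ℕ) : ℤ) - ((i - 1) * n / m : ℕ) - 2)
    {s : ℕ} (hs1 : 1 ≤ s) (hsm : s ≤ m) :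
    ∑ i ∈ Icc 1 s, κ i = ((s * n / m : ℕ) : ℤ) - (2 * s - 1) := by
  rw [← add_sum_Ioc_eq_sum_Icc hs1, sum_Ioc_kappa_eq hκ le_rfl hs1 hsm, hκ1, one_mul]
  ring

end Kappa

theorem kappa_shift_sum_ge_general (m n : ℕ)
    (κ : ℕ → ℤ)
    (hκ1 : κ 1 = ((n / m : ℕ) : ℤ) - 1)
    (hκ : ∀ i, 2 ≤ i → i ≤ m → κ i = ((i * n / m : ℕ) : ℤ) - ((i - 1) * n / m : ℕ) - 2)
    (r s : ℕ) (hr1 : 1 ≤ r) (hrm : r ≤ m) (hs1 : 1 ≤ s) (hsm : s ≤ m + 1 - r) :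
    κ r + 1 + ∑ i ∈ Finset.Icc (r + 1) (r + s - 1), κ i ≥ ((s * n / m : ℕ) : ℤ) - (2 * s - 1) ∧
    ((s * n / m : ℕ) : ℤ) - (2 * s - 1) = ∑ i ∈ Finset.Icc 1 s, κ i := by
  refine ⟨?_, (sum_Icc_one_kappa_eq hκ1 hκ hs1 (by omega)).symm⟩
  have hκr := kappa_ge hκ1 hκ hr1 hrm
  have hsuper : (((r - 1) * n / m : ℕ) : ℤ) + (s * n / m : ℕ) ≤ ((r + s - 1) * n / m : ℕ) := by
    have := Nat.div_add_div_le_add_div (x := (r - 1) * n) (y := s * n) (z := m)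
    rw [← add_mul, show r - 1 + s = r + s - 1 by omega] at this
    exact_mod_cast this
  have hcast : ((r + s - 1 : ℕ) : ℤ) = r + s - 1 := by omega
  rw [Icc_add_one_left_eq_Ioc, sum_Ioc_kappa_eq hκ hr1 (by omega) (by omega), hcast]
  linarith

/-- κᵣ + 1 + Σ_{i=r+1}^{r+s-1} κᵢ ≥ ⌊sn/m⌋ - (2s-1) = Σ_{i=1}^{s} κᵢ. -/
theorem kappa_shift_sum_ge (m n : ℕ) (hm : 2 ≤ m) (hmn : Nat.Coprime m n) (h2 : 2 * m ≤ n)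
    (κ : ℕ → ℤ)
    (hκ1 : κ 1 = ((n / m : ℕ) : ℤ) - 1)
    (hκ : ∀ i, 2 ≤ i → i ≤ m → κ i = ((i * n / m : ℕ) : ℤ) - ((i - 1) * n / m : ℕ) - 2)
    (r s : ℕ) (hr1 : 1 ≤ r) (hrm : r ≤ m) (hs1 : 1 ≤ s) (hsm : s ≤ m + 1 - r) :
    κ r + 1 + ∑ i ∈ Finset.Icc (r + 1) (r + s - 1), κ i ≥ ((s * n / m : ℕ) : ℤ) - (2 * s - 1) ∧
    ((s * n / m : ℕ) : ℤ) - (2 * s - 1) = ∑ i ∈ Finset.Icc 1 s, κ i :=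
  kappa_shift_sum_ge_general m n κ hκ1 hκ r s hr1 hrm hs1 hsm
end

section
/- Let m/n ∈ (0,1/2) be in lowest terms. For k ∈ {0,…,m-1}, say k is m/n-admissible if the integer interval [k+1, m-1] is disjoint from the orbit segment O[k,0] of k under addition of m modulo n ending at 0. Then 0 and m-1 are both m/n-admissible. -/
/-- The least κ ≥ 0 with r + κm ≡ s (mod n). -/
noncomputable def kappaLeast (n m r s : ℕ) : ℕ :=
  sInf {j : ℕ | ((r + j * m : ℕ) : ZMod n) = (s : ZMod n)}

/-- The orbit segment O_{m/n}[r,s] = {r + jm mod n : 0 ≤ j ≤ κ}, κ least with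
r + κm ≡ s (mod n). -/
noncomputable def orbSeg (n m r s : ℕ) : Finset (ZMod n) :=
  (Finset.range (kappaLeast n m r s + 1)).image (fun j => ((r + j * m : ℕ) : ZMod n))

/-- k ∈ {0,…,m-1} is m/n-admissible if [k+1,m-1] ∩ O_{m/n}[k,0] = ∅. -/
def IsAdmissible (m n k : ℕ) : Prop :=
  ∀ r : ℕ, k + 1 ≤ r → r ≤ m - 1 → ((r : ZMod n) ∉ orbSeg n m k 0)

/-- 0 and m-1 are m/n-admissible. -/
theorem zero_and_pred_admissible (m n : ℕ) (hm : 0 < m) (h2 : 2 * m < n)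
    (hmn : Nat.Coprime m n) :
    IsAdmissible m n 0 ∧ IsAdmissible m n (m - 1) := by
  constructor
  · intro r hr hr' hmem
    have hk : kappaLeast n m 0 0 = 0 := Nat.sInf_eq_zero.mpr (Or.inl (by simp))
    simp only [orbSeg, hk, Finset.range_one, Finset.image_singleton,
      Finset.mem_singleton] at hmem
    have h0 : ((r : ℕ) : ZMod n) = ((0 : ℕ) : ZMod n) := by
      simpa using hmem
    have hdvd : n ∣ r := (ZMod.natCast_eq_zero_iff r n).mp (by simpa using h0)
    have := Nat.le_of_dvd (by omega) hdvd
    omega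
  · intro r hr hr' _
    omega
end

section
/- Let m/n ∈ (0,1/2) in lowest terms with m > 1, and let u/v be the left Farey parent of m/n (so mv - nu = 1, 0 < v < n). Let R = O[m, n-1] (the orbit segment of m under addition of m mod n ending at n-1), which has cardinality n - v. Define ψ : ℤ/nℤ → ℤ/vℤ by ψ(k) = k - #(R ∩ [0,k]). Then ψ(0) = 0, ψ(m-1) = ψ(m) = u, ψ(n-1) = v - 1, and ψ is a (weakly) increasing surjection. -/
/-- ψ(k) = k - #(R ∩ [0,k]) where R = O_{m/n}[m, n-1]. -/
noncomputable def psiFun (n m k : ℕ) : ℕ :=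
  k - ((orbSeg n m m (n - 1)).filter (fun x => x.val ≤ k)).card

/-!
Since `m * v ≡ 1 (mod n)`, the orbit of `m` under `+m` reaches `-1 = (n - v) * m` after exactly
`n - v` steps, so `R = {m, 2m, …, (n - v)m} (mod n)`. A multiple `i * m` has residue `< m` exactly
when the step from `(i - 1) * m` to `i * m` jumps over a multiple of `n`, so the number of such
`i ≤ n - v` is `⌊(n - v) * m / n⌋ = m - u - 1` (as `(n - v) * m = (m - u) * n - 1`); this gives
`ψ(m - 1) = u`, and `m ∈ R` gives `ψ(m) = u`. Monotonicity and surjectivity hold for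
`k ↦ k - #(s ∩ [0, k])` with any set `s` of residues, since this function grows by `0` or `1`
at each step.
-/

open Finset

theorem Nat.add_div_eq_div_add_ite {a m n : ℕ} (hmn : m ≤ n) :
    (a + m) / n = a / n + if (a + m) % n < m then 1 else 0 := by
  rcases Nat.eq_zero_or_pos n with rfl | hn
  · simp
  have hle : a / n ≤ (a + m) / n := Nat.div_le_div_right (by omega)
  have hge : (a + m) / n ≤ a / n + 1 :=
    calc (a + m) / n ≤ (a + n) / n := Nat.div_le_div_right (by omega)
      _ = a / n + 1 := Nat.add_div_right a hn
  have ha := Nat.div_add_mod a n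
  have ham := Nat.div_add_mod (a + m) n
  have := Nat.mod_lt a hn
  rcases (show (a + m) / n = a / n ∨ (a + m) / n = a / n + 1 by omega) with h | h
  · rw [h] at ham
    rw [h, if_neg (by omega), add_zero]
  · rw [h, mul_add, mul_one] at ham
    rw [h, if_pos (by omega)]

theorem card_filter_add_mul_mod_lt {m n : ℕ} (hmn : m ≤ n) (N : ℕ) :
    #{j ∈ range N | (m + j * m) % n < m} = N * m / n := by
  induction N with
  | zero => simp
  | succ N ih =>
    rw [range_add_one, filter_insert, apply_ite card, card_insert_of_notMem (by simp), ih,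
      add_mul, one_mul, add_comm m, Nat.add_div_eq_div_add_ite hmn]
    split_ifs <;> rfl

theorem Nat.exists_eq_of_map_succ_le_add_one {f : ℕ → ℕ} (hf : ∀ k, f (k + 1) ≤ f k + 1)
    {N j : ℕ} (h0 : f 0 ≤ j) (hN : j ≤ f N) : ∃ k ≤ N, f k = j := by
  induction N with
  | zero => exact ⟨0, le_rfl, by omega⟩
  | succ N ih =>
    by_cases hj : j ≤ f N
    · obtain ⟨k, hk, hfk⟩ := ih hj
      exact ⟨k, by omega, hfk⟩
    · exact ⟨N + 1, le_rfl, by have := hf N; omega⟩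

namespace ZMod

theorem filter_val_le_succ_subset {n : ℕ} [NeZero n] (s : Finset (ZMod n)) (k : ℕ) :
    {x ∈ s | x.val ≤ k + 1} ⊆ insert ((k + 1 : ℕ) : ZMod n) {x ∈ s | x.val ≤ k} := by
  intro x hx
  rw [mem_filter] at hx
  rw [mem_insert, mem_filter]
  rcases hx.2.lt_or_eq with hlt | heq
  · exact .inr ⟨hx.1, by omega⟩
  · exact .inl (by rw [← heq, natCast_zmod_val])

theorem card_filter_val_le_succ_le {n : ℕ} [NeZero n] (s : Finset (ZMod n)) (k : ℕ) :
    #{x ∈ s | x.val ≤ k + 1} ≤ #{x ∈ s | x.val ≤ k} + 1 :=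
  (card_le_card (filter_val_le_succ_subset s k)).trans (card_insert_le _ _)

theorem card_filter_val_le_of_mem {n : ℕ} [NeZero n] {s : Finset (ZMod n)} {k : ℕ}
    (hk0 : 0 < k) (hk : k < n) (hs : (k : ZMod n) ∈ s) :
    #{x ∈ s | x.val ≤ k} = #{x ∈ s | x.val ≤ k - 1} + 1 := by
  obtain ⟨k, rfl⟩ : ∃ j, k = j + 1 := ⟨k - 1, by omega⟩
  have hval : ((k + 1 : ℕ) : ZMod n).val = k + 1 := val_cast_of_lt hk
  have hinsert :
      {x ∈ s | x.val ≤ k + 1} = insert ((k + 1 : ℕ) : ZMod n) {x ∈ s | x.val ≤ k} := by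
    refine (filter_val_le_succ_subset s k).antisymm (insert_subset ?_ ?_)
    · exact mem_filter.2 ⟨hs, hval.le⟩
    · exact monotone_filter_right s fun x _ (hx : x.val ≤ k) => by omega
  rw [Nat.add_sub_cancel, hinsert,
    card_insert_of_notMem (by rw [mem_filter, hval]; omega)]

theorem monotone_sub_card_filter_val_le {n : ℕ} [NeZero n] (s : Finset (ZMod n)) :
    Monotone fun k => k - #{x ∈ s | x.val ≤ k} :=
  monotone_nat_of_le_succ fun k => by have := card_filter_val_le_succ_le s k; omega

theorem sub_card_filter_val_le_succ_le {n : ℕ} (s : Finset (ZMod n)) (k : ℕ) :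
    k + 1 - #{x ∈ s | x.val ≤ k + 1} ≤ k - #{x ∈ s | x.val ≤ k} + 1 := by
  have : #{x ∈ s | x.val ≤ k} ≤ #{x ∈ s | x.val ≤ k + 1} :=
    card_le_card (monotone_filter_right s fun x _ (hx : x.val ≤ k) => by omega)
  omega

end ZMod

section Orbit

variable {n m v : ℕ}

theorem injOn_natCast_add_mul (hmv : (m : ZMod n) * v = 1) :
    Set.InjOn (fun j : ℕ => ((m + j * m : ℕ) : ZMod n)) (Set.Iio n) := by
  intro a ha b hb hab
  have h : (a : ZMod n) = b := by
    push_cast at hab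
    linear_combination (v : ZMod n) * hab - ((a : ZMod n) - b) * hmv
  rwa [ZMod.natCast_eq_natCast_iff', Nat.mod_eq_of_lt ha, Nat.mod_eq_of_lt hb] at h

theorem injOn_range_natCast_add_mul (hmv : (m : ZMod n) * v = 1) :
    Set.InjOn (fun j : ℕ => ((m + j * m : ℕ) : ZMod n)) (range (n - v)) :=
  (injOn_natCast_add_mul hmv).mono fun j hj => by
    simp only [coe_range, Set.mem_Iio] at hj ⊢
    omega

variable [NeZero n]

theorem natCast_add_mul_eq_natCast_pred_iff (hmv : (m : ZMod n) * v = 1) (j : ℕ) :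
    ((m + j * m : ℕ) : ZMod n) = ((n - 1 : ℕ) : ZMod n) ↔ n ∣ j + 1 + v := by
  have hpred : ((n - 1 : ℕ) : ZMod n) = -1 := by
    rw [Nat.cast_pred (NeZero.pos n), ZMod.natCast_self, zero_sub]
  rw [hpred, ← ZMod.natCast_eq_zero_iff]
  push_cast
  constructor
  · intro h
    linear_combination (v : ZMod n) * h - (1 + (j : ZMod n)) * hmv
  · intro h
    linear_combination (m : ZMod n) * h - hmv

theorem kappaLeast_eq (hmv : (m : ZMod n) * v = 1) (hvn : v < n) :
    kappaLeast n m m (n - 1) = n - v - 1 := by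
  refine IsLeast.csInf_eq ⟨?_, fun j hj => ?_⟩
  · change _ = _
    rw [natCast_add_mul_eq_natCast_pred_iff hmv, show n - v - 1 + 1 + v = n by omega]
  · change _ = _ at hj
    rw [natCast_add_mul_eq_natCast_pred_iff hmv] at hj
    have := Nat.le_of_dvd (by omega) hj
    omega

theorem orbSeg_eq_image (hmv : (m : ZMod n) * v = 1) (hvn : v < n) :
    orbSeg n m m (n - 1) = (range (n - v)).image fun j => ((m + j * m : ℕ) : ZMod n) := by
  rw [orbSeg, kappaLeast_eq hmv hvn, Nat.sub_add_cancel (by omega)]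

theorem card_orbSeg (hmv : (m : ZMod n) * v = 1) (hvn : v < n) :
    #(orbSeg n m m (n - 1)) = n - v := by
  rw [orbSeg_eq_image hmv hvn, card_image_of_injOn (injOn_range_natCast_add_mul hmv),
    card_range]

theorem card_filter_orbSeg (hmv : (m : ZMod n) * v = 1) (hvn : v < n) (k : ℕ) :
    #{x ∈ orbSeg n m m (n - 1) | x.val ≤ k} = #{j ∈ range (n - v) | (m + j * m) % n ≤ k} := by
  rw [orbSeg_eq_image hmv hvn, filter_image,
    card_image_of_injOn ((injOn_range_natCast_add_mul hmv).mono (filter_subset _ _))]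
  simp only [ZMod.val_natCast]

end Orbit

theorem natCast_mul_eq_one_of_mul_eq {n m u v : ℕ} (h : m * v = n * u + 1) :
    (m : ZMod n) * v = 1 := by
  simpa using congrArg (Nat.cast : ℕ → ZMod n) h

theorem lt_of_mul_eq_mul_add_one {n m u v : ℕ} (hvn : v < n) (h : m * v = n * u + 1) : u < m := by
  nlinarith

section Psi

variable {n m u v : ℕ} [NeZero n]

theorem card_filter_orbSeg_val_le_pred_self (hmn : m ≤ n) (hvn : v < n)
    (h : m * v = n * u + 1) : #{x ∈ orbSeg n m m (n - 1) | x.val ≤ m - 1} = m - u - 1 := by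
  have hum := lt_of_mul_eq_mul_add_one hvn h
  have hcount : (n - v) * m + 1 = (m - u) * n := by
    zify [hvn.le, hum.le]; linarith
  rw [card_filter_orbSeg (natCast_mul_eq_one_of_mul_eq h) hvn,
    filter_congr fun j _ => Nat.le_sub_one_iff_lt (by omega), card_filter_add_mul_mod_lt hmn]
  exact Nat.div_eq_of_lt_le (by rw [Nat.sub_one_mul]; omega)
    (by rw [Nat.sub_one_add_one (by omega)]; omega)

theorem psiFun_pred_self (hmn : m ≤ n) (hvn : v < n) (h : m * v = n * u + 1) :
    psiFun n m (m - 1) = u := by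
  rw [psiFun, card_filter_orbSeg_val_le_pred_self hmn hvn h]
  have := lt_of_mul_eq_mul_add_one hvn h
  omega

theorem psiFun_self (hmn : m < n) (hvn : v < n) (h : m * v = n * u + 1) :
    psiFun n m m = u := by
  have hmv := natCast_mul_eq_one_of_mul_eq h
  have hmem : (m : ZMod n) ∈ orbSeg n m m (n - 1) := by
    rw [orbSeg_eq_image hmv hvn]
    exact mem_image.2 ⟨0, mem_range.2 (by omega), by rw [zero_mul, add_zero]⟩
  have hum := lt_of_mul_eq_mul_add_one hvn h
  rw [psiFun, ZMod.card_filter_val_le_of_mem (by omega) hmn hmem,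
    card_filter_orbSeg_val_le_pred_self hmn.le hvn h]
  omega

theorem psiFun_pred_modulus (hmv : (m : ZMod n) * v = 1) (hvn : v < n) :
    psiFun n m (n - 1) = v - 1 := by
  rw [psiFun, filter_true_of_mem fun x _ => Nat.le_sub_one_of_lt (ZMod.val_lt x),
    card_orbSeg hmv hvn]
  omega

end Psi

theorem psi_props_general (m n u v : ℕ) (h2 : 2 * m < n)
    (hvn : v < n)
    (hfarey : (m : ℤ) * v - (n : ℤ) * u = 1) :
    (orbSeg n m m (n - 1)).card = n - v ∧
    psiFun n m 0 = 0 ∧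
    psiFun n m (m - 1) = u ∧
    psiFun n m m = u ∧
    psiFun n m (n - 1) = v - 1 ∧
    (∀ k k' : ℕ, k ≤ k' → k' < n → psiFun n m k ≤ psiFun n m k') ∧
    (∀ j : ℕ, j < v → ∃ k : ℕ, k < n ∧ psiFun n m k = j) := by
  have : NeZero n := ⟨by omega⟩
  have hfarey' : m * v = n * u + 1 := by zify; linarith
  have hmv := natCast_mul_eq_one_of_mul_eq hfarey'
  have hpsi_zero : psiFun n m 0 = 0 := Nat.zero_sub _
  refine ⟨card_orbSeg hmv hvn, hpsi_zero, psiFun_pred_self (by omega) hvn hfarey',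
    psiFun_self (by omega) hvn hfarey', psiFun_pred_modulus hmv hvn,
    fun k k' hk _ => ZMod.monotone_sub_card_filter_val_le _ hk, fun j hj => ?_⟩
  obtain ⟨k, hk, rfl⟩ := Nat.exists_eq_of_map_succ_le_add_one
    (ZMod.sub_card_filter_val_le_succ_le (orbSeg n m m (n - 1))) (hpsi_zero.le.trans j.zero_le)
    (show j ≤ psiFun n m (n - 1) by rw [psiFun_pred_modulus hmv hvn]; omega)
  exact ⟨k, by omega, rfl⟩

/-- #R = n - v, ψ(0) = 0, ψ(m-1) = ψ(m) = u, ψ(n-1) = v-1, and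
ψ is a weakly increasing surjection from {0,…,n-1} onto {0,…,v-1}. -/
theorem psi_props (m n u v : ℕ) (hm : 1 < m) (h2 : 2 * m < n) (hmn : Nat.Coprime m n)
    (hv0 : 0 < v) (hvn : v < n) (huv : Nat.Coprime u v)
    (hfarey : (m : ℤ) * v - (n : ℤ) * u = 1) :
    (orbSeg n m m (n - 1)).card = n - v ∧
    psiFun n m 0 = 0 ∧
    psiFun n m (m - 1) = u ∧
    psiFun n m m = u ∧
    psiFun n m (n - 1) = v - 1 ∧
    (∀ k k' : ℕ, k ≤ k' → k' < n → psiFun n m k ≤ psiFun n m k') ∧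
    (∀ j : ℕ, j < v → ∃ k : ℕ, k < n ∧ psiFun n m k = j) :=
  psi_props_general m n u v h2 hvn hfarey
end

section
/- Let m/n ∈ (0,1/2) in lowest terms, and let LFS(m/n) = (0 = u₁/v₁, u₂/v₂, …, u_α/v_α) be the left Farey sequence of m/n (where u_α/v_α = LFP(m/n) and uᵢ/vᵢ = LFP(u_{i+1}/v_{i+1})). Then the set of m/n-admissible integers in {0,…,m-1} has exactly α elements. -/
/-!
Write `f w = m * w % n`. The orbit of `k < m` under `+ m` up to `0` consists of the residues
`m - f s` for `1 ≤ s ≤ w`, where `f w = m - k`; so `k` is admissible iff `w` is a record low of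
`f`: `f w ≤ f s` for all `1 ≤ s ≤ w`. The record lows are exactly the denominators
`v₁ < ⋯ < v_α` of the left Farey sequence: consecutive Farey neighbours form a basis of `ℤ²`,
and expanding `(⌊m w / n⌋, w)` in the basis `(uᵢ, vᵢ), (uᵢ₊₁, vᵢ₊₁)` shows
`f w > f vᵢ = m vᵢ - n uᵢ` whenever `vᵢ < w < vᵢ₊₁`, while `m vᵢ - n uᵢ` decreases along the
sequence (by `(uᵢ, vᵢ) + (uᵢ₊₂, vᵢ₊₂) = c (uᵢ₊₁, vᵢ₊₁)` with `c ≥ 2`).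
-/

theorem Nat.one_le_mul_mod {m n s : ℕ} (hmn : m.Coprime n) (hs : 1 ≤ s) (hsn : s < n) :
    1 ≤ m * s % n := by
  by_contra! h0
  have hdvd : n ∣ s := hmn.symm.dvd_of_dvd_mul_left (Nat.dvd_of_mod_eq_zero (by omega))
  exact absurd (Nat.le_of_dvd hs hdvd) (by omega)

theorem Nat.mul_mod_injOn {m n : ℕ} (hmn : m.Coprime n) :
    Set.InjOn (fun w => m * w % n) (Set.Iio n) := fun _ ha _ hb hab =>
  (Nat.ModEq.cancel_left_of_coprime (Nat.coprime_comm.mp hmn) hab).eq_of_lt_of_lt ha hb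

theorem exists_le_lt_succ {β : Type*} [LinearOrder β] {f : ℕ → β} {a b : ℕ} {x : β}
    (hab : a ≤ b) (ha : f a ≤ x) (hb : x < f b) : ∃ j, a ≤ j ∧ j < b ∧ f j ≤ x ∧ x < f (j + 1) := by
  induction b, hab using Nat.le_induction with
  | base => exact absurd hb (not_lt.mpr ha)
  | succ b hab ih =>
    by_cases hxb : x < f b
    · obtain ⟨j, hj⟩ := ih hxb
      exact ⟨j, hj.1, by omega, hj.2.2⟩
    · exact ⟨b, hab, by omega, not_lt.mp hxb, hb⟩

theorem lt_or_eq_or_eq_of_det_eq_one {m n U V U' V' q w : ℤ}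
    (hdet : U' * V - V' * U = 1) (hV : 1 ≤ V) (hVV' : V < V')
    (hD' : 0 ≤ m * V' - n * U') (hDD' : m * V' - n * U' < m * V - n * U)
    (hw : 1 ≤ w) (hwV' : w ≤ V') (hc : 1 ≤ m * w - n * q) :
    m * V - n * U < m * w - n * q ∨ w = V ∨ w = V' := by
  -- `(U, V)` and `(U', V')` form a basis of `ℤ²`; expand `(q, w)` in it.
  set a := w * U' - q * V'
  set b := q * V - w * U
  have hwab : w = a * V + b * V' := by linear_combination (-w) * hdet
  have hcab : m * w - n * q = a * (m * V - n * U) + b * (m * V' - n * U') := by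
    linear_combination (n * q - m * w) * hdet
  rcases lt_trichotomy a 0 with ha | ha | ha
  · have hb : b ≤ -a := by nlinarith
    nlinarith
  · have hb : b = 1 := by
      rw [ha] at hwab
      nlinarith
    refine Or.inr (Or.inr ?_)
    rw [hwab, ha, hb]
    ring
  · rcases lt_trichotomy b 0 with hb | hb | hb
    · have hab : 1 - b ≤ a := by nlinarith
      exact Or.inl (by nlinarith)
    · rcases eq_or_lt_of_le (show 1 ≤ a from ha) with ha1 | ha1
      · refine Or.inr (Or.inl ?_)
        rw [hwab, hb, ← ha1]
        ring
      · exact Or.inl (by nlinarith)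
    · nlinarith

def recordLows (m n : ℕ) : Finset ℕ :=
  {w ∈ Finset.Ico 1 n | ∀ s ≤ w, 0 < s → m * w % n ≤ m * s % n}

theorem mem_recordLows {m n w : ℕ} :
    w ∈ recordLows m n ↔ 1 ≤ w ∧ w < n ∧ ∀ s ≤ w, 0 < s → m * w % n ≤ m * s % n := by
  simp [recordLows, and_assoc]

/-- Models the left Farey sequence `U i / V i`, `1 ≤ i ≤ α`, of `m / n`, followed by `m / n`
itself at index `α + 1`. -/
structure IsFareyChainTo (m n α : ℕ) (U V : ℕ → ℕ) : Prop where
  det_eq_one : ∀ i, 1 ≤ i → i ≤ α → (U (i + 1) : ℤ) * V i - V (i + 1) * U i = 1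
  V_one : V 1 = 1
  V_lt_V_succ : ∀ i, 1 ≤ i → i ≤ α → V i < V (i + 1)
  U_last : U (α + 1) = m
  V_last : V (α + 1) = n

def defect (m n : ℕ) (U V : ℕ → ℕ) (i : ℕ) : ℤ := m * V i - n * U i

namespace IsFareyChainTo

variable {m n α : ℕ} {U V : ℕ → ℕ}

theorem strictMonoOn_V (h : IsFareyChainTo m n α U V) : StrictMonoOn V (Set.Icc 1 (α + 1)) :=
  strictMonoOn_of_lt_add_one Set.ordConnected_Icc fun i _ hi hi' =>
    h.V_lt_V_succ i hi.1 (by have := hi'.2; omega)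

theorem one_le_V (h : IsFareyChainTo m n α U V) {i : ℕ} (hi1 : 1 ≤ i) (hi : i ≤ α + 1) :
    1 ≤ V i :=
  h.V_one ▸ h.strictMonoOn_V.monotoneOn ⟨le_rfl, by omega⟩ ⟨hi1, hi⟩ hi1

theorem V_lt (h : IsFareyChainTo m n α U V) {i : ℕ} (hi1 : 1 ≤ i) (hi : i ≤ α) : V i < n :=
  h.V_last ▸ h.strictMonoOn_V ⟨hi1, by omega⟩ ⟨by omega, le_rfl⟩ (by omega)

theorem defect_last (h : IsFareyChainTo m n α U V) : defect m n U V (α + 1) = 0 := by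
  rw [defect, h.U_last, h.V_last, mul_comm, sub_self]

theorem defect_self (h : IsFareyChainTo m n α U V) (hα : 1 ≤ α) : defect m n U V α = 1 := by
  simpa [defect, h.U_last, h.V_last] using h.det_eq_one α hα le_rfl

/-- With `P i = (U i, V i)`: `P i + P (i + 2) = det (P i, P (i + 2)) • P (i + 1)`, evaluated at
the linear form `(u, v) ↦ a v - b u`. -/
theorem add_eq_det_mul (h : IsFareyChainTo m n α U V) {i : ℕ} (hi : 1 ≤ i) (hiα : i + 1 ≤ α)
    (a b : ℤ) :
    (a * V i - b * U i) + (a * V (i + 2) - b * U (i + 2)) =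
      ((U (i + 2) : ℤ) * V i - V (i + 2) * U i) * (a * V (i + 1) - b * U (i + 1)) := by
  have h₁ := h.det_eq_one i hi (by omega)
  have h₂ := h.det_eq_one (i + 1) (by omega) hiα
  linear_combination (b * U i - a * V i) * h₂ + (b * U (i + 2) - a * V (i + 2)) * h₁

theorem two_le_det (h : IsFareyChainTo m n α U V) {i : ℕ} (hi : 1 ≤ i) (hiα : i + 1 ≤ α) :
    2 ≤ (U (i + 2) : ℤ) * V i - V (i + 2) * U i := by
  have hV := h.add_eq_det_mul hi hiα 1 0
  have h₀ : (1 : ℤ) ≤ V i := by exact_mod_cast h.one_le_V hi (by omega)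
  have h₁ : (1 : ℤ) ≤ V (i + 1) := by exact_mod_cast h.one_le_V (by omega) (by omega)
  have h₂ : (V (i + 1) : ℤ) < V (i + 2) := by exact_mod_cast h.V_lt_V_succ (i + 1) (by omega) hiα
  nlinarith

theorem defect_sub_defect_le (h : IsFareyChainTo m n α U V) {i : ℕ} (hi : 1 ≤ i)
    (hiα : i + 1 ≤ α) (hD : 0 ≤ defect m n U V (i + 1)) :
    defect m n U V (i + 1) - defect m n U V (i + 2) ≤
      defect m n U V i - defect m n U V (i + 1) := by
  have hD := h.add_eq_det_mul hi hiα m n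
  have hc := h.two_le_det hi hiα
  simp only [defect] at *
  nlinarith

theorem defect_succ_lt (h : IsFareyChainTo m n α U V) {i : ℕ} (hi : 1 ≤ i) (hiα : i ≤ α) :
    defect m n U V (i + 1) < defect m n U V i := by
  suffices defect m n U V (i + 1) < defect m n U V i ∧ 0 ≤ defect m n U V (i + 1) from this.1
  induction hiα using Nat.decreasingInduction with
  | self =>
    rw [h.defect_last, h.defect_self hi]
    norm_num
  | of_succ k hk ih =>
    obtain ⟨hlt, hnonneg⟩ : defect m n U V (k + 2) < defect m n U V (k + 1) ∧
        0 ≤ defect m n U V (k + 2) := ih (by omega)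
    have := h.defect_sub_defect_le hi hk (by omega)
    constructor <;> omega

theorem strictAntiOn_defect (h : IsFareyChainTo m n α U V) :
    StrictAntiOn (defect m n U V) (Set.Icc 1 (α + 1)) :=
  strictAntiOn_of_add_one_lt Set.ordConnected_Icc fun i _ hi hi' =>
    h.defect_succ_lt hi.1 (by have := hi'.2; omega)

theorem defect_nonneg (h : IsFareyChainTo m n α U V) {i : ℕ} (hi1 : 1 ≤ i) (hi : i ≤ α + 1) :
    0 ≤ defect m n U V i :=
  h.defect_last ▸ h.strictAntiOn_defect.antitoneOn ⟨hi1, hi⟩ ⟨by omega, le_rfl⟩ hi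

theorem defect_le (h : IsFareyChainTo m n α U V) {i : ℕ} (hi1 : 1 ≤ i) (hi : i ≤ α + 1) :
    defect m n U V i ≤ m := by
  have := h.strictAntiOn_defect.antitoneOn ⟨le_rfl, by omega⟩ ⟨hi1, hi⟩ hi1
  have hU : (0 : ℤ) ≤ n * U 1 := by positivity
  simp only [defect, h.V_one, Nat.cast_one, mul_one] at this ⊢
  linarith

theorem mul_mod_eq_defect (h : IsFareyChainTo m n α U V) (hmlt : m < n) {i : ℕ} (hi1 : 1 ≤ i)
    (hi : i ≤ α) : ((m * V i % n : ℕ) : ℤ) = defect m n U V i := by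
  have h₀ := h.defect_nonneg hi1 (by omega)
  have h₁ := h.defect_le hi1 (by omega)
  push_cast
  rw [show (m * V i : ℤ) = defect m n U V i + n * U i by simp [defect], Int.add_mul_emod_self_left,
    Int.emod_eq_of_lt h₀ (by omega)]

theorem defect_lt_mul_mod_or_eq (h : IsFareyChainTo m n α U V) (hmn : m.Coprime n) {i s : ℕ}
    (hi : 1 ≤ i) (hiα : i ≤ α) (hs : 1 ≤ s) (hsV : s ≤ V (i + 1)) :
    defect m n U V i < (m * s % n : ℕ) ∨ s = V i ∨ s = V (i + 1) := by
  rcases eq_or_lt_of_le hsV with hsV | hsV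
  · exact Or.inr (Or.inr hsV)
  have hsn : s < n := hsV.trans_le (h.V_last ▸ h.strictMonoOn_V.monotoneOn
    ⟨by omega, by omega⟩ ⟨by omega, le_rfl⟩ (by omega))
  have hc : ((m * s % n : ℕ) : ℤ) = m * s - n * (m * s / n : ℤ) := by
    push_cast
    exact Int.emod_def _ _
  rw [hc]
  have := lt_or_eq_or_eq_of_det_eq_one (q := (m * s / n : ℤ)) (w := s) (h.det_eq_one i hi hiα)
    (by exact_mod_cast h.one_le_V hi (by omega)) (by exact_mod_cast h.V_lt_V_succ i hi hiα)
    (h.defect_nonneg (by omega) (by omega)) (h.defect_succ_lt hi hiα) (by exact_mod_cast hs)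
    (by exact_mod_cast hsV.le) (by rw [← hc]; exact_mod_cast Nat.one_le_mul_mod hmn hs hsn)
  simpa [defect] using this

theorem recordLows_eq (h : IsFareyChainTo m n α U V) (hmn : m.Coprime n) (hmlt : m < n) :
    recordLows m n = (Finset.Icc 1 α).image V := by
  ext w
  simp only [mem_recordLows, Finset.mem_Icc, Finset.mem_image]
  constructor
  · rintro ⟨hw, hwn, hrec⟩
    obtain ⟨j, hj, hjα, hVj, hwVj⟩ := exists_le_lt_succ (f := V) (by omega : 1 ≤ α + 1)
      (h.V_one ▸ hw) (h.V_last ▸ hwn)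
    refine ⟨j, ⟨hj, by omega⟩, (eq_or_lt_of_le hVj).resolve_right fun hVjw => ?_⟩
    have hmin := hrec (V j) hVj (h.one_le_V hj (by omega))
    have := h.mul_mod_eq_defect hmlt hj (by omega)
    rcases h.defect_lt_mul_mod_or_eq hmn hj (by omega) hw hwVj.le with hlt | hwj | hwj <;> omega
  · rintro ⟨j, ⟨hj, hjα⟩, rfl⟩
    refine ⟨h.one_le_V hj (by omega), h.V_lt hj hjα, fun s hsV hs => ?_⟩
    obtain rfl | ⟨i, rfl, hi⟩ : j = 1 ∨ ∃ i, j = i + 1 ∧ 1 ≤ i := by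
      rcases eq_or_lt_of_le hj with rfl | hj
      · exact Or.inl rfl
      · exact Or.inr ⟨j - 1, by omega, by omega⟩
    · rw [h.V_one] at hsV ⊢
      rw [show s = 1 by omega]
    have hDj := h.mul_mod_eq_defect hmlt hj hjα
    have hDi := h.mul_mod_eq_defect hmlt hi (by omega)
    have hdec := h.defect_succ_lt hi (by omega)
    rcases h.defect_lt_mul_mod_or_eq hmn hi (by omega) hs hsV with hlt | rfl | rfl <;> omega

end IsFareyChainTo

theorem isFareyChainTo_append {m n α : ℕ} {u v : ℕ → ℕ} (hα : 1 ≤ α) (hv1 : v 1 = 1)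
    (hstep : ∀ i, 1 ≤ i → i < α →
      (u (i + 1) : ℤ) * v i - (v (i + 1) : ℤ) * u i = 1 ∧ v i < v (i + 1))
    (hlast : (m : ℤ) * v α - (n : ℤ) * u α = 1) (hvα : v α < n) :
    IsFareyChainTo m n α (fun j => if j = α + 1 then m else u j)
      (fun j => if j = α + 1 then n else v j) where
  det_eq_one i hi hiα := by
    rcases eq_or_lt_of_le hiα with rfl | hiα
    · simpa using hlast
    · simp only [if_neg (show i ≠ α + 1 by omega), if_neg (show i + 1 ≠ α + 1 by omega)]
      exact (hstep i hi hiα).1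
  V_one := by
    rwa [if_neg (by omega)]
  V_lt_V_succ i hi hiα := by
    rcases eq_or_lt_of_le hiα with rfl | hiα
    · simpa using hvα
    · simp only [if_neg (show i ≠ α + 1 by omega), if_neg (show i + 1 ≠ α + 1 by omega)]
      exact (hstep i hi hiα).2
  U_last := by simp
  V_last := by simp

theorem kappaLeast_eq_s16 {n m k t : ℕ} (hmn : m.Coprime n) (htn : t < n)
    (ht : ((k + t * m : ℕ) : ZMod n) = 0) : kappaLeast n m k 0 = t := by
  have hmem : t ∈ {j : ℕ | ((k + j * m : ℕ) : ZMod n) = ((0 : ℕ) : ZMod n)} := by simpa using ht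
  refine le_antisymm (Nat.sInf_le hmem) (le_csInf ⟨t, hmem⟩ fun j hj => ?_)
  have hjt : j ≡ t [MOD n] := Nat.ModEq.cancel_right_of_coprime hmn.symm <|
    Nat.ModEq.add_left_cancel' k <| (ZMod.natCast_eq_natCast_iff _ _ _).mp (hj.trans hmem.symm)
  calc t = j % n := by rw [hjt, Nat.mod_eq_of_lt htn]
    _ ≤ j := Nat.mod_le j n

theorem mem_orbSeg_iff {n m k s : ℕ} {x : ZMod n} :
    x ∈ orbSeg n m k s ↔ ∃ t ≤ kappaLeast n m k s, ((k + t * m : ℕ) : ZMod n) = x := by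
  simp [orbSeg]

theorem isAdmissible_sub_mul_mod_iff {m n w : ℕ} (hmn : m.Coprime n) (hw : 1 ≤ w) (hwn : w < n)
    (hwm : m * w % n ≤ m) :
    IsAdmissible m n (m - m * w % n) ↔ ∀ s ≤ w, 0 < s → m * w % n ≤ m * s % n := by
  -- The orbit of `m - m * w % n` up to `0` is `m - m * s` for `s = w, w - 1, …, 1`.
  have horbit : ∀ t < w,
      ((m - m * w % n + t * m : ℕ) : ZMod n) = m - ((m * (w - t) % n : ℕ) : ZMod n) := by
    intro t ht
    push_cast [Nat.cast_sub hwm, Nat.cast_sub ht.le, ZMod.natCast_mod]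
    ring
  have hκ : kappaLeast n m (m - m * w % n) 0 = w - 1 := by
    refine kappaLeast_eq_s16 hmn (by omega) ?_
    rw [horbit _ (by omega), Nat.sub_sub_self hw, mul_one, ZMod.natCast_mod, sub_self]
  simp only [IsAdmissible, mem_orbSeg_iff, hκ]
  constructor
  · intro hadm s hsw hs
    by_contra! hlt
    have := Nat.one_le_mul_mod hmn hs (by omega)
    refine hadm (m - m * s % n) (by omega) (by omega) ⟨w - s, by omega, ?_⟩
    rw [horbit _ (by omega), Nat.sub_sub_self hsw, Nat.cast_sub (by omega)]
  · rintro hrec r hr hrm ⟨t, ht, hrt⟩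
    have hcast : ((m * (w - t) % n : ℕ) : ZMod n) = ((m - r : ℕ) : ZMod n) := by
      rw [Nat.cast_sub (by omega), ← hrt, horbit _ (by omega)]
      ring
    have hmin := hrec (w - t) (by omega) (by omega)
    have := Nat.mod_lt (m * w) (by omega : 0 < n)
    have := congrArg ZMod.val hcast
    rw [ZMod.val_cast_of_lt (Nat.mod_lt _ (by omega)), ZMod.val_cast_of_lt (by omega)] at this
    omega

theorem mul_mod_le_of_mem_recordLows {m n w : ℕ} (hmlt : m < n) (hw : w ∈ recordLows m n) :
    m * w % n ≤ m := by
  obtain ⟨hw1, -, hrec⟩ := mem_recordLows.mp hw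
  simpa [Nat.mod_eq_of_lt hmlt] using hrec 1 hw1 one_pos

theorem admissible_eq_image_recordLows {m n : ℕ} (hmn : m.Coprime n) (hmlt : m < n) :
    @Finset.filter ℕ (fun k => IsAdmissible m n k) (Classical.decPred _) (Finset.range m) =
      (recordLows m n).image (fun w => m - m * w % n) := by
  ext k
  simp only [Finset.mem_filter, Finset.mem_range, Finset.mem_image]
  constructor
  · rintro ⟨hkm, hadm⟩
    obtain ⟨w, hwn, hw⟩ := Nat.exists_mul_mod_eq_of_coprime (m - k) hmn (by omega)
    rw [Nat.mod_eq_of_lt (show m - k < n by omega)] at hw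
    have hw1 : 1 ≤ w := Nat.pos_of_ne_zero fun h0 => by simp [h0] at hw; omega
    rw [show k = m - m * w % n by omega,
      isAdmissible_sub_mul_mod_iff hmn hw1 hwn (by omega)] at hadm
    exact ⟨w, mem_recordLows.mpr ⟨hw1, hwn, hadm⟩, by omega⟩
  · rintro ⟨w, hw, rfl⟩
    obtain ⟨hw1, hwn, hrec⟩ := mem_recordLows.mp hw
    have hpos := Nat.one_le_mul_mod hmn hw1 hwn
    have hle := mul_mod_le_of_mem_recordLows hmlt hw
    exact ⟨by omega, (isAdmissible_sub_mul_mod_iff hmn hw1 hwn hle).mpr hrec⟩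

theorem card_admissible_eq_card_recordLows {m n : ℕ} (hmn : m.Coprime n) (hmlt : m < n) :
    (@Finset.filter ℕ (fun k => IsAdmissible m n k) (Classical.decPred _) (Finset.range m)).card =
      (recordLows m n).card := by
  rw [admissible_eq_image_recordLows hmn hmlt, Finset.card_image_of_injOn]
  intro a ha b hb hab
  have := mul_mod_le_of_mem_recordLows hmlt ha
  have := mul_mod_le_of_mem_recordLows hmlt hb
  exact Nat.mul_mod_injOn hmn (mem_recordLows.mp ha).2.1 (mem_recordLows.mp hb).2.1
    (by simp only at hab ⊢; omega)

theorem card_admissible_eq_lfs_length_general (m n : ℕ)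
    (h2 : 2 * m < n) (hmn : Nat.Coprime m n)
    (α : ℕ) (hα : 1 ≤ α) (u v : ℕ → ℕ)
    (hv1 : v 1 = 1)
    (hlast : (m : ℤ) * v α - (n : ℤ) * u α = 1) (hvα : v α < n)
    (hstep : ∀ i, 1 ≤ i → i < α →
      (u (i + 1) : ℤ) * v i - (v (i + 1) : ℤ) * u i = 1 ∧ v i < v (i + 1)) :
    (@Finset.filter ℕ (fun k => IsAdmissible m n k) (Classical.decPred _) (Finset.range m)).card = α := by
  have hchain := isFareyChainTo_append hα hv1 hstep hlast hvα
  have hinj : Set.InjOn (fun j => if j = α + 1 then n else v j) (Finset.Icc 1 α) :=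
    hchain.strictMonoOn_V.injOn.mono fun j hj => by
      simp only [Finset.coe_Icc, Set.mem_Icc] at hj ⊢
      omega
  rw [card_admissible_eq_card_recordLows hmn (by omega), hchain.recordLows_eq hmn (by omega),
    Finset.card_image_of_injOn hinj, Nat.card_Icc, Nat.add_sub_cancel]

/-- if LFS(m/n) = (0 = u₁/v₁, …, u_α/v_α), then there are exactly
α many m/n-admissible integers in {0,…,m-1}. -/
theorem card_admissible_eq_lfs_length (m n : ℕ)
    (hm : 0 < m) (h2 : 2 * m < n) (hmn : Nat.Coprime m n)
    (α : ℕ) (hα : 1 ≤ α) (u v : ℕ → ℕ)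
    (hu1 : u 1 = 0) (hv1 : v 1 = 1)
    (hcop : ∀ i, 1 ≤ i → i ≤ α → Nat.Coprime (u i) (v i))
    (hlast : (m : ℤ) * v α - (n : ℤ) * u α = 1) (hvα : v α < n)
    (hstep : ∀ i, 1 ≤ i → i < α →
      (u (i + 1) : ℤ) * v i - (v (i + 1) : ℤ) * u i = 1 ∧ v i < v (i + 1)) :
    (@Finset.filter ℕ (fun k => IsAdmissible m n k) (Classical.decPred _) (Finset.range m)).card = α :=
  card_admissible_eq_lfs_length_general m n h2 hmn α hα u v hv1 hlast hvα hstep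
end

section
/- Let m/n ∈ (0,1/2) in lowest terms, with left Farey sequence (0 = u₁/v₁, …, u_α/v_α) and m/n-admissible integers 0 = k₁ < k₂ < ⋯ < k_α = m-1. Then for each i, the orbit segment O_{m/n}[kᵢ, 0] of kᵢ under addition of m modulo n ending at 0 has cardinality vᵢ. -/
lemma lemB (n m : ℤ) (v1 d1 v2 d2 t e : ℤ)
    (hn : 0 < n)
    (hv1 : 1 ≤ v1) (hv12 : v1 < v2)
    (hd2 : 1 ≤ d2) (hd21 : d2 ≤ d1)
    (hcross : d1 * v2 - d2 * v1 = n)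
    (hc1 : n ∣ d1 - m * v1) (hc2 : n ∣ d2 - m * v2)
    (ht1 : 1 ≤ t) (ht2 : t < v2) (he : 1 ≤ e) (hce : n ∣ e - m * t) :
    d1 ≤ e := by
  obtain ⟨x, hx⟩ : n ∣ e * v2 - t * d2 := by
    have h : e * v2 - t * d2 = (e - m * t) * v2 - t * (d2 - m * v2) := by ring
    rw [h]; exact dvd_sub (hce.mul_right _) (hc2.mul_left _)
  obtain ⟨y, hy⟩ : n ∣ t * d1 - e * v1 := by
    have h : t * d1 - e * v1 = t * (d1 - m * v1) - (e - m * t) * v1 := by ring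
    rw [h]; exact dvd_sub (hc1.mul_left _) (hce.mul_right _)
  have ht : t = x * v1 + y * v2 := by
    have h1 : n * t = n * (x * v1 + y * v2) := by
      calc n * t = t * (d1 * v2 - d2 * v1) := by rw [hcross]; ring
        _ = (e * v2 - t * d2) * v1 + (t * d1 - e * v1) * v2 := by ring
        _ = (n * x) * v1 + (n * y) * v2 := by rw [← hx, ← hy]
        _ = n * (x * v1 + y * v2) := by ring
    exact mul_left_cancel₀ (ne_of_gt hn) h1
  have heq : e = x * d1 + y * d2 := by
    have h1 : n * e = n * (x * d1 + y * d2) := by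
      calc n * e = e * (d1 * v2 - d2 * v1) := by rw [hcross]; ring
        _ = (e * v2 - t * d2) * d1 + (t * d1 - e * v1) * d2 := by ring
        _ = (n * x) * d1 + (n * y) * d2 := by rw [← hx, ← hy]
        _ = n * (x * d1 + y * d2) := by ring
    exact mul_left_cancel₀ (ne_of_gt hn) h1
  rcases le_or_gt x 0 with hx0 | hx0 <;> rcases le_or_gt y 0 with hy0 | hy0
  · -- x ≤ 0, y ≤ 0 : e ≤ 0, contradiction
    exfalso
    nlinarith [mul_nonneg (neg_nonneg.2 hx0) (show (0:ℤ) ≤ d1 by linarith),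
      mul_nonneg (neg_nonneg.2 hy0) (show (0:ℤ) ≤ d2 by linarith)]
  · -- x ≤ 0, y ≥ 1 : contradiction
    exfalso
    have hya : y ≤ -x := by
      by_contra hcon
      push_neg at hcon
      have h1 : -x + 1 ≤ y := by linarith
      nlinarith [mul_le_mul_of_nonneg_right h1 (show (0:ℤ) ≤ v2 by linarith),
        mul_le_mul_of_nonneg_left (le_of_lt hv12) (show (0:ℤ) ≤ -x by linarith)]
    nlinarith [mul_le_mul_of_nonneg_right hya (show (0:ℤ) ≤ d2 by linarith),
      mul_le_mul_of_nonneg_left hd21 (show (0:ℤ) ≤ -x by linarith)]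
  · -- x ≥ 1, y ≤ 0 : main case, e ≥ d1
    have hxb : -y + 1 ≤ x := by
      by_contra hcon
      push_neg at hcon
      have h1 : x ≤ -y := by linarith
      nlinarith [mul_le_mul_of_nonneg_right h1 (show (0:ℤ) ≤ v1 by linarith),
        mul_le_mul_of_nonneg_left (le_of_lt hv12) (show (0:ℤ) ≤ -y by linarith)]
    nlinarith [mul_le_mul_of_nonneg_left hd21 (show (0:ℤ) ≤ x - 1 by linarith),
      mul_nonneg (show (0:ℤ) ≤ x - 1 + y by linarith) (show (0:ℤ) ≤ d2 by linarith)]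
  · -- x ≥ 1, y ≥ 1 : contradiction
    exfalso
    nlinarith [mul_le_mul_of_nonneg_right (show (1:ℤ) ≤ x by linarith) (show (0:ℤ) ≤ v1 by linarith),
      mul_le_mul_of_nonneg_right (show (1:ℤ) ≤ y by linarith) (show (0:ℤ) ≤ v2 by linarith)]

lemma kappa_card (n m w r : ℕ) (hn : 2 ≤ n) (hmn : Nat.Coprime m n)
    (hw1 : 1 ≤ w) (hwn : w ≤ n)
    (hcong : ((r + (w - 1) * m : ℕ) : ZMod n) = 0) :
    kappaLeast n m r 0 = w - 1 ∧ (orbSeg n m r 0).card = w := by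
  haveI : NeZero n := ⟨by omega⟩
  have hunit : IsUnit (m : ZMod n) := (ZMod.isUnit_iff_coprime m n).mpr hmn
  have hcancel : ∀ j1 j2 : ℕ, j1 < n → j2 < n →
      ((r + j1 * m : ℕ) : ZMod n) = ((r + j2 * m : ℕ) : ZMod n) → j1 = j2 := by
    intro j1 j2 h1 h2 heq
    push_cast at heq
    have h3 : (m : ZMod n) * j1 = (m : ZMod n) * j2 := by
      have := add_left_cancel heq
      rw [mul_comm (j1 : ZMod n), mul_comm (j2 : ZMod n)] at this
      exact this
    have h4 : ((j1 : ℕ) : ZMod n) = ((j2 : ℕ) : ZMod n) := hunit.mul_left_cancel h3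
    have h5 : j1 ≡ j2 [MOD n] := (ZMod.natCast_eq_natCast_iff _ _ _).mp h4
    have := h5.eq_of_lt_of_lt h1 h2
    omega
  have hkap : kappaLeast n m r 0 = w - 1 := by
    have hmem : (w - 1) ∈ {j : ℕ | ((r + j * m : ℕ) : ZMod n) = ((0:ℕ) : ZMod n)} := by
      simpa using hcong
    apply le_antisymm (Nat.sInf_le hmem)
    apply le_csInf ⟨_, hmem⟩
    intro j hj
    by_contra hcon
    push_neg at hcon
    have := hcancel j (w - 1) (by omega) (by omega) (by
      simp only [Set.mem_setOf_eq] at hj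
      rw [hj]; simpa using hcong.symm)
    omega
  refine ⟨hkap, ?_⟩
  rw [orbSeg, hkap]
  have hw : w - 1 + 1 = w := by omega
  rw [hw]
  rw [Finset.card_image_of_injOn, Finset.card_range]
  intro j1 hj1 j2 hj2 heq
  simp only [Finset.coe_range, Set.mem_Iio] at hj1 hj2
  exact hcancel j1 j2 (by omega) (by omega) heq

lemma adm_general (m n : ℕ) (hm : 0 < m) (h2 : 2 * m < n) (hmn : Nat.Coprime m n)
    (w1 w2 : ℕ) (D1 D2 : ℤ)
    (hw1 : 1 ≤ w1) (hw12 : w1 < w2) (hw2n : w2 ≤ n)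
    (hd2 : 1 ≤ D2) (hd21 : D2 ≤ D1) (hd1m : D1 ≤ m)
    (hcross : D1 * w2 - D2 * w1 = n)
    (hc1 : (n:ℤ) ∣ D1 - m * w1) (hc2 : (n:ℤ) ∣ D2 - m * w2)
    (c : ℕ) (hc : (c : ℤ) = m - D1) :
    IsAdmissible m n c := by
  haveI : NeZero n := ⟨by omega⟩
  intro r hr1 hr2 hmem
  have hcong : ((c + (w1 - 1) * m : ℕ) : ZMod n) = 0 := by
    rw [show ((c + (w1 - 1) * m : ℕ) : ZMod n) = (((c + (w1 - 1) * m : ℕ) : ℤ) : ZMod n) by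
      push_cast; ring]
    rw [ZMod.intCast_zmod_eq_zero_iff_dvd]
    have : ((c + (w1 - 1) * m : ℕ) : ℤ) = (m : ℤ) * w1 - D1 := by
      push_cast [hw1]
      rw [hc]; ring
    rw [this]
    have : (m : ℤ) * w1 - D1 = -(D1 - m * w1) := by ring
    rw [this]
    exact dvd_neg.mpr hc1
  have hkap := (kappa_card n m w1 c (by omega) hmn hw1 (by omega) hcong).1
  rw [orbSeg, hkap] at hmem
  obtain ⟨j, hjr, hj⟩ := Finset.mem_image.mp hmem
  rw [Finset.mem_range] at hjr
  -- j ≤ w1 - 1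
  have hme : (c + j * m) ≡ r [MOD n] := (ZMod.natCast_eq_natCast_iff _ _ _).mp hj
  have hdvd : (n : ℤ) ∣ (r : ℤ) - ((c : ℤ) + j * m) := by
    have h := (Nat.modEq_iff_dvd).mp hme
    push_cast at h
    convert h using 1
  rcases Nat.eq_or_lt_of_le (Nat.lt_succ_iff.mp hjr) with hjw | hjw
  · -- j = w1 - 1 : r ≡ 0 mod n, impossible
    have hr0 : (n : ℤ) ∣ (r : ℤ) := by
      have hcj : (c : ℤ) + j * m = (m : ℤ) * w1 - D1 := by
        rw [hc]
        have : (j : ℤ) = (w1 : ℤ) - 1 := by omega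
        rw [this]; ring
      have h2' : (n : ℤ) ∣ (m : ℤ) * w1 - D1 := by
        have : (m : ℤ) * w1 - D1 = -(D1 - m * w1) := by ring
        rw [this]; exact dvd_neg.mpr hc1
      have := dvd_add hdvd (hcj ▸ h2')
      simpa using this
    have hrpos : 0 < (r : ℤ) := by
      have : 1 ≤ r := by omega
      exact_mod_cast this
    have := Int.le_of_dvd hrpos hr0
    have hrm : (r : ℤ) ≤ (m : ℤ) - 1 := by omega
    omega
  · -- j < w1 - 1
    set e : ℤ := D1 + r - m with hedef
    have hrge : (m : ℤ) - D1 + 1 ≤ r := by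
      have : (c : ℤ) + 1 ≤ r := by exact_mod_cast hr1
      omega
    have he1 : 1 ≤ e := by omega
    have he2 : e ≤ D1 - 1 := by
      have : (r : ℤ) ≤ (m : ℤ) - 1 := by omega
      omega
    have hce : (n : ℤ) ∣ e - m * j := by
      have h : e - (m : ℤ) * j = (r : ℤ) - ((c : ℤ) + j * m) := by rw [hc]; ring
      rw [h]; exact hdvd
    rcases Nat.eq_zero_or_pos j with hj0 | hj0
    · subst hj0
      have : (n : ℤ) ∣ e := by simpa using hce
      have := Int.le_of_dvd (by omega) this
      omega
    · have := lemB n m w1 D1 w2 D2 j e (by omega)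
        (by exact_mod_cast hw1) (by exact_mod_cast hw12)
        hd2 hd21 hcross hc1 hc2
        (by exact_mod_cast hj0) (by
          have : (j : ℤ) < (w1 : ℤ) := by exact_mod_cast (by omega : j < w1)
          have hww : (w1 : ℤ) < w2 := by exact_mod_cast hw12
          omega)
        he1 hce
      omega

/-- if LFS(m/n) = (0 = u₁/v₁, …, u_α/v_α) and the m/n-admissible
integers are 0 = k₁ < ⋯ < k_α = m-1, then #O_{m/n}[kᵢ,0] = vᵢ for each i. -/
theorem card_orbSeg_admissible (m n : ℕ)
    (hm : 0 < m) (h2 : 2 * m < n) (hmn : Nat.Coprime m n)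
    (α : ℕ) (hα : 1 ≤ α) (u v : ℕ → ℕ)
    (hu1 : u 1 = 0) (hv1 : v 1 = 1)
    (hcop : ∀ i, 1 ≤ i → i ≤ α → Nat.Coprime (u i) (v i))
    (hlast : (m : ℤ) * v α - (n : ℤ) * u α = 1) (hvα : v α < n)
    (hstep : ∀ i, 1 ≤ i → i < α →
      (u (i + 1) : ℤ) * v i - (v (i + 1) : ℤ) * u i = 1 ∧ v i < v (i + 1))
    (k : ℕ → ℕ)
    (hk1 : k 1 = 0) (hkα : k α = m - 1)
    (hkmono : ∀ i j, 1 ≤ i → i < j → j ≤ α → k i < k j)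
    (hkadm : ∀ i, 1 ≤ i → i ≤ α → k i < m ∧ IsAdmissible m n (k i))
    (hkall : ∀ j, j < m → IsAdmissible m n j → ∃ i, 1 ≤ i ∧ i ≤ α ∧ k i = j) :
    ∀ i, 1 ≤ i → i ≤ α → (orbSeg n m (k i) 0).card = v i := by
  haveI : NeZero n := ⟨by omega⟩
  set D : ℕ → ℤ := fun j => (m : ℤ) * v j - (n : ℤ) * u j with hDdef
  have hDα : D α = 1 := hlast
  have hD1 : D 1 = m := by simp [hDdef, hu1, hv1]
  have hcong : ∀ i, (n : ℤ) ∣ D i - (m : ℤ) * v i := by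
    intro i; exact ⟨-(u i : ℤ), by simp only [hDdef]; ring⟩
  have hvstep : ∀ i, 1 ≤ i → i < α → v i < v (i + 1) := fun i h1 h2 => (hstep i h1 h2).2
  have hcross : ∀ i, 1 ≤ i → i < α → D i * v (i + 1) - D (i + 1) * v i = n := by
    intro i h1 h2
    have hdet := (hstep i h1 h2).1
    simp only [hDdef]
    linear_combination (n : ℤ) * hdet
  -- strict chain for v
  have hvlt : ∀ j i, 1 ≤ i → i < j → j ≤ α → v i < v j := by
    intro j
    induction j with
    | zero => omega
    | succ jj ih =>
      intro i h1 h2 h3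
      rcases Nat.lt_or_ge i jj with h | h
      · have := ih i h1 h (by omega)
        have := hvstep jj (by omega) (by omega)
        omega
      · have : i = jj := by omega
        subst this
        exact hvstep i h1 (by omega)
  have hvchain : ∀ i j, 1 ≤ i → i ≤ j → j ≤ α → v i ≤ v j := by
    intro i j h1 h2 h3
    rcases Nat.eq_or_lt_of_le h2 with h | h
    · exact le_of_eq (by rw [h])
    · exact le_of_lt (hvlt j i h1 h h3)
  have hvpos : ∀ i, 1 ≤ i → i ≤ α → 1 ≤ v i := by
    intro i h1 h2
    have := hvchain 1 i le_rfl h1 h2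
    omega
  have hvn : ∀ i, 1 ≤ i → i ≤ α → v i < n := by
    intro i h1 h2
    have := hvchain i α h1 h2 le_rfl
    omega
  -- D is positive
  have hDpos : ∀ t i, 1 ≤ i → i ≤ α → α - i = t → 1 ≤ D i := by
    intro t
    induction t with
    | zero =>
      intro i h1 h2 h3
      have : i = α := by omega
      rw [this, hDα]
    | succ tt ih =>
      intro i h1 h2 h3
      have hiα : i < α := by omega
      have hnext := ih (i + 1) (by omega) (by omega) (by omega)
      have hc := hcross i h1 hiα
      have hv1' : (1 : ℤ) ≤ (v (i + 1) : ℤ) := by exact_mod_cast hvpos (i + 1) (by omega) (by omega)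
      have hvi : (1 : ℤ) ≤ (v i : ℤ) := by exact_mod_cast hvpos i h1 (by omega)
      by_contra hcon
      push_neg at hcon
      nlinarith [mul_le_mul hnext hvi (by norm_num) (by linarith),
        mul_le_mul_of_nonneg_right (show D i ≤ 0 by linarith) (show (0:ℤ) ≤ (v (i+1) : ℤ) by linarith)]
  have hDpos' : ∀ i, 1 ≤ i → i ≤ α → 1 ≤ D i := fun i h1 h2 => hDpos (α - i) i h1 h2 rfl
  -- D strictly decreasing
  have hDdec : ∀ t i, 1 ≤ i → i < α → α - 1 - i = t → D (i + 1) < D i := by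
    intro t
    induction t with
    | zero =>
      intro i h1 h2 h3
      have hia : i + 1 = α := by omega
      have hc := hcross i h1 h2
      rw [hia, hDα] at hc
      rw [hia, hDα]
      have hvαZ : (v α : ℤ) < n := by exact_mod_cast hvα
      have hviZ : (1 : ℤ) ≤ (v i : ℤ) := by exact_mod_cast hvpos i h1 (by omega)
      have hvαZ1 : (1 : ℤ) ≤ (v α : ℤ) := by exact_mod_cast hvpos α hα le_rfl
      nlinarith
    | succ tt ih =>
      intro i h1 h2 h3
      have h2' : i + 1 < α := by omega
      have hnext := ih (i + 1) (by omega) h2' (by omega)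
      have hle : D (i + 1) ≤ D i := by
        apply lemB n m (v (i + 1)) (D (i + 1)) (v (i + 2)) (D (i + 2)) (v i) (D i)
          (by exact_mod_cast (by omega : 0 < n))
          (by exact_mod_cast hvpos (i + 1) (by omega) (by omega))
          (by exact_mod_cast hvstep (i + 1) (by omega) h2')
          (hDpos' (i + 2) (by omega) (by omega))
          hnext.le
          (hcross (i + 1) (by omega) h2')
          (hcong (i + 1)) (hcong (i + 2))
          (by exact_mod_cast hvpos i h1 (by omega))
          (by exact_mod_cast hvlt (i + 2) i h1 (by omega) (by omega))
          (hDpos' i h1 (by omega))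
          (hcong i)
      rcases lt_or_eq_of_le hle with h | h
      · exact h
      · exfalso
        have hd1 : (n : ℤ) ∣ D i - (m : ℤ) * v i := hcong i
        have hd2 : (n : ℤ) ∣ D (i + 1) - (m : ℤ) * v (i + 1) := hcong (i + 1)
        have hdd : (n : ℤ) ∣ (m : ℤ) * ((v (i + 1) : ℤ) - v i) := by
          have := dvd_sub hd1 hd2
          rw [h] at this
          have heq : D i - (m : ℤ) * v i - (D i - (m : ℤ) * v (i+1)) = (m : ℤ) * ((v (i + 1) : ℤ) - v i) := by ring
          rwa [heq] at this
        have hvle : v i ≤ v (i + 1) := (hvstep i h1 h2).le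
        have hdd2 : n ∣ m * (v (i + 1) - v i) := by
          have : ((m * (v (i + 1) - v i) : ℕ) : ℤ) = (m : ℤ) * ((v (i + 1) : ℤ) - v i) := by
            push_cast [hvle]; ring
          exact_mod_cast (this ▸ hdd)
        have hdd3 : n ∣ (v (i + 1) - v i) := (Nat.Coprime.dvd_of_dvd_mul_left hmn.symm hdd2)
        have hlt : v (i + 1) - v i < n := by
          have := hvn (i + 1) (by omega) (by omega)
          omega
        have hpos : 0 < v (i + 1) - v i := by
          have := hvstep i h1 h2
          omega
        have := Nat.le_of_dvd hpos hdd3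
        omega
  have hDdec' : ∀ i, 1 ≤ i → i < α → D (i + 1) < D i := fun i h1 h2 => hDdec (α - 1 - i) i h1 h2 rfl
  -- strict chain for D
  have hDlt : ∀ j i, 1 ≤ i → i < j → j ≤ α → D j < D i := by
    intro j
    induction j with
    | zero => omega
    | succ jj ih =>
      intro i h1 h2 h3
      rcases Nat.lt_or_ge i jj with h | h
      · have := ih i h1 h (by omega)
        have := hDdec' jj (by omega) (by omega)
        omega
      · have : i = jj := by omega
        subst this
        exact hDdec' i h1 (by omega)
  have hDm : ∀ i, 1 ≤ i → i ≤ α → D i ≤ m := by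
    intro i h1 h2
    rcases Nat.eq_or_lt_of_le h1 with h | h
    · rw [← h, hD1]
    · have := hDlt i 1 le_rfl h h2
      rw [hD1] at this
      omega
  -- define c
  set c : ℕ → ℕ := fun j => m - (D j).toNat with hcdef
  have hcZ : ∀ i, 1 ≤ i → i ≤ α → (c i : ℤ) = (m : ℤ) - D i := by
    intro i h1 h2
    have h3 := hDpos' i h1 h2
    have h4 := hDm i h1 h2
    simp only [hcdef]
    omega
  have hclt : ∀ i, 1 ≤ i → i ≤ α → c i < m := by
    intro i h1 h2
    have := hcZ i h1 h2
    have := hDpos' i h1 h2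
    omega
  -- admissibility of c i
  have hcadm : ∀ i, 1 ≤ i → i ≤ α → IsAdmissible m n (c i) := by
    intro i hi1 hi2
    rcases Nat.lt_or_ge i α with hiα | hiα
    · exact adm_general m n hm h2 hmn (v i) (v (i + 1)) (D i) (D (i + 1))
        (hvpos i hi1 hi2) (hvstep i hi1 hiα) (le_of_lt (hvn (i+1) (by omega) (by omega)))
        (hDpos' (i + 1) (by omega) (by omega)) (hDdec' i hi1 hiα).le (hDm i hi1 hi2)
        (hcross i hi1 hiα) (hcong i) (hcong (i + 1)) (c i) (hcZ i hi1 hi2)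
    · have hieq : i = α := by omega
      subst hieq
      have hcα : (c i : ℤ) = (m : ℤ) - 1 := by rw [hcZ i hi1 hi2, hDα]
      intro r hr1 hr2 _
      omega
  -- match k with c via unique monotone enumeration
  have hkc : ∀ i, 1 ≤ i → i ≤ α → k i = c i := by
    have hf : StrictMono (fun x : Fin α => k (x.1 + 1)) := by
      intro a b hab
      exact hkmono (a.1 + 1) (b.1 + 1) (by omega)
        (Nat.add_lt_add_right (Fin.lt_def.mp hab) 1) (Nat.succ_le_of_lt b.2)
    have hg : StrictMono (fun x : Fin α => c (x.1 + 1)) := by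
      intro a b hab
      have hD := hDlt (b.1 + 1) (a.1 + 1) (by omega)
        (Nat.add_lt_add_right (Fin.lt_def.mp hab) 1) (Nat.succ_le_of_lt b.2)
      have hZ1 := hcZ (a.1 + 1) (by omega) (by have := b.2; have := Fin.lt_def.mp hab; omega)
      have hZ2 := hcZ (b.1 + 1) (by omega) (Nat.succ_le_of_lt b.2)
      simp only []
      omega
    set s : Finset ℕ := Finset.image (fun x : Fin α => k (x.1 + 1)) Finset.univ with hs
    have hcard : s.card = α := by
      rw [hs, Finset.card_image_of_injective _ hf.injective, Finset.card_univ, Fintype.card_fin]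
    have hfs : ∀ x : Fin α, (fun x : Fin α => k (x.1 + 1)) x ∈ s := fun x =>
      Finset.mem_image_of_mem _ (Finset.mem_univ x)
    have hgs : ∀ x : Fin α, (fun x : Fin α => c (x.1 + 1)) x ∈ s := by
      intro x
      obtain ⟨i, hi1, hi2, hi3⟩ := hkall (c (x.1 + 1))
        (hclt (x.1 + 1) (by omega) (Nat.succ_le_of_lt x.2))
        (hcadm (x.1 + 1) (by omega) (Nat.succ_le_of_lt x.2))
      refine Finset.mem_image.mpr ⟨⟨i - 1, by omega⟩, Finset.mem_univ _, ?_⟩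
      simp only []
      rw [show i - 1 + 1 = i by omega]
      exact hi3
    have e1 := Finset.orderEmbOfFin_unique hcard hfs hf
    have e2 := Finset.orderEmbOfFin_unique hcard hgs hg
    intro i h1 h2
    have heq : (fun x : Fin α => k (x.1 + 1)) ⟨i - 1, by omega⟩
        = (fun x : Fin α => c (x.1 + 1)) ⟨i - 1, by omega⟩ := by
      rw [e1, e2]
    simp only [] at heq
    rwa [show i - 1 + 1 = i by omega] at heq
  -- final computation
  intro i h1 h2
  rw [hkc i h1 h2]
  have hvi := hvpos i h1 h2
  have hcong2 : ((c i + (v i - 1) * m : ℕ) : ZMod n) = 0 := by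
    rw [show ((c i + (v i - 1) * m : ℕ) : ZMod n) = (((c i + (v i - 1) * m : ℕ) : ℤ) : ZMod n) by
      push_cast; ring]
    rw [ZMod.intCast_zmod_eq_zero_iff_dvd]
    have hZ : ((c i + (v i - 1) * m : ℕ) : ℤ) = (n : ℤ) * u i := by
      push_cast [Nat.cast_sub hvi]
      rw [hcZ i h1 h2]
      simp only [hDdef]
      ring
    rw [hZ]
    exact Dvd.intro _ rfl
  exact (kappa_card n m (v i) (c i) (by omega) hmn hvi (le_of_lt (hvn i h1 h2)) hcong2).2
end

section
/- Let m/n < 1/2 be in lowest terms, and write c_{m/n} = 1 0^{κ₁} 1² 0^{κ₂} 1² ⋯ 1² 0^{κ_m} 1 where κ₁ = ⌊n/m⌋ - 1 and κᵢ = ⌊in/m⌋ - ⌊(i-1)n/m⌋ - 2 for 2 ≤ i ≤ m. For 1 ≤ r ≤ m, let c = 1 0^{κ_r + 1} 1² 0^{κ_{r+1}} 1² ⋯ 1² 0^{κ_m} 1. Then c disagrees with c_{m/n} at some position within the shorter of their lengths, and at the first position of disagreement c has symbol 0 while c_{m/n} has symbol 1 (i.e. c has a longer block of 0s at that point, so c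 is greater in the unimodal order). -/
/-!
Write `F i = ⌊i n / m⌋`. Both words are concatenations of blocks `1 0^a 1`; the block of
`c_{m/n}` with exponent `κ_{j+1}` has length `F (j+1) - F j` (plus one for `j = 0`), so comparing
the words amounts to comparing the exponent sequences lexicographically. For `r = 1` they
already differ in the first exponent. For `r = s + 1 ≥ 2`, the exponents of `c` are the gaps of
`F` started at `s`, and they agree with those of `c_{m/n}` as long as `F s + F j = F (s + j)`.
Since `F` is superadditive and `F s + F (m - s) < F m = n` by coprimality, this additivity
breaks at some first `j ≤ m - s`, and there the exponent of `c` is the larger one.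
-/

namespace TweakDisagree

open List

def block (a : ℕ) : List ℕ := 1 :: (replicate a 0 ++ [1])

def blockWord (l : List ℕ) : List ℕ := (l.map block).flatten

def DisagreeAt (u v : List ℕ) (t : ℕ) : Prop :=
  t < min u.length v.length ∧ (∀ j, j < t → u.getD j 0 = v.getD j 0) ∧
    u.getD t 0 = 0 ∧ v.getD t 0 = 1

@[simp] lemma length_block (a : ℕ) : (block a).length = a + 2 := by
  simp [block]

lemma getD_block_of_lt {a j : ℕ} (h : j < a) : (block a).getD (j + 1) 0 = 0 := by
  change (replicate a 0 ++ [1]).getD j 0 = 0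
  rw [getD_append _ _ _ _ (by simpa using h)]
  simp [h]

lemma getD_block_succ (a : ℕ) : (block a).getD (a + 1) 0 = 1 := by
  simp [block]

lemma blockWord_append (l₁ l₂ : List ℕ) :
    blockWord (l₁ ++ l₂) = blockWord l₁ ++ blockWord l₂ := by
  simp [blockWord]

lemma blockWord_cons (a : ℕ) (l : List ℕ) : blockWord (a :: l) = block a ++ blockWord l := by
  simp [blockWord]

lemma disagreeAt_block_append {a b : ℕ} (hba : b < a) (u v : List ℕ) :
    DisagreeAt (block a ++ u) (block b ++ v) (b + 1) := by
  have hA : ∀ j, j < a + 2 → (block a ++ u).getD j 0 = (block a).getD j 0 :=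
    fun j hj => getD_append _ _ _ _ (by simpa using hj)
  have hB : ∀ j, j < b + 2 → (block b ++ v).getD j 0 = (block b).getD j 0 :=
    fun j hj => getD_append _ _ _ _ (by simpa using hj)
  refine ⟨by simp only [length_append, length_block, lt_inf_iff]; omega, fun j hj => ?_, ?_, ?_⟩
  · rw [hA j (by omega), hB j (by omega)]
    rcases j with _ | j
    · rfl
    · rw [getD_block_of_lt (by omega), getD_block_of_lt (by omega)]
  · rw [hA _ (by omega), getD_block_of_lt hba]
  · rw [hB _ (by omega), getD_block_succ]

lemma DisagreeAt.append_left {u v : List ℕ} {t : ℕ} (h : DisagreeAt u v t) (p : List ℕ) :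
    DisagreeAt (p ++ u) (p ++ v) (p.length + t) := by
  obtain ⟨ht, hagree, hu, hv⟩ := h
  refine ⟨by rw [length_append, length_append, Nat.add_min_add_left]; omega,
    fun j hj => ?_, ?_, ?_⟩
  · rcases lt_or_ge j p.length with hj' | hj'
    · rw [getD_append _ _ _ _ hj', getD_append _ _ _ _ hj']
    · rw [getD_append_right _ _ _ _ hj', getD_append_right _ _ _ _ hj']
      exact hagree _ (by omega)
  · rwa [getD_append_right _ _ _ _ (by omega), Nat.add_sub_cancel_left]
  · rwa [getD_append_right _ _ _ _ (by omega), Nat.add_sub_cancel_left]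

lemma exists_eq_append_cons_of_getElem_eq {α : Type*} {l₁ l₂ : List α} {K : ℕ}
    (h₁ : K < l₁.length) (h₂ : K < l₂.length)
    (heq : ∀ j (hj : j < K), l₁[j] = l₂[j]) :
    ∃ p u v, l₁ = p ++ l₁[K] :: u ∧ l₂ = p ++ l₂[K] :: v := by
  have htake : l₂.take K = l₁.take K :=
    ext_getElem (by simp only [length_take]; omega) fun j _ hj => by
      simp only [length_take, lt_inf_iff] at hj
      simp [heq j hj.1]
  refine ⟨l₁.take K, l₁.drop (K + 1), l₂.drop (K + 1), ?_, ?_⟩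
  · rw [← drop_eq_getElem_cons, take_append_drop]
  · rw [← htake, ← drop_eq_getElem_cons, take_append_drop]

lemma exists_disagreeAt_blockWord {l₁ l₂ : List ℕ} {K : ℕ}
    (h₁ : K < l₁.length) (h₂ : K < l₂.length)
    (heq : ∀ j (hj : j < K), l₁[j] = l₂[j]) (hlt : l₂[K] < l₁[K]) :
    ∃ t, DisagreeAt (blockWord l₁) (blockWord l₂) t := by
  obtain ⟨p, u, v, hl₁, hl₂⟩ := exists_eq_append_cons_of_getElem_eq h₁ h₂ heq
  rw [hl₁, hl₂, blockWord_append, blockWord_append, blockWord_cons, blockWord_cons]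
  exact ⟨_, (disagreeAt_block_append hlt _ _).append_left _⟩

section Floor

variable {m n : ℕ}

lemma mul_div_add_mul_div_le (a b : ℕ) : a * n / m + b * n / m ≤ (a + b) * n / m := by
  rw [add_mul]
  exact Nat.div_add_div_le_add_div

lemma mul_div_mul_lt (hmn : m.Coprime n) {a : ℕ} (ha : 0 < a) (ham : a < m) :
    a * n / m * m < a * n := by
  refine (Nat.div_mul_le_self _ _).lt_of_ne fun h => ?_
  have hdvd : m ∣ a := hmn.dvd_of_dvd_mul_right ⟨a * n / m, by rw [mul_comm m]; exact h.symm⟩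
  exact absurd (Nat.le_of_dvd ha hdvd) (by omega)

lemma mul_div_add_mul_div_lt (hmn : m.Coprime n) {a b : ℕ} (ha : 0 < a) (hb : 0 < b)
    (hab : a + b = m) : a * n / m + b * n / m < n := by
  have hA := mul_div_mul_lt hmn ha (by omega)
  have hB := mul_div_mul_lt hmn hb (by omega)
  refine Nat.lt_of_mul_lt_mul_right (a := m) ?_
  calc (a * n / m + b * n / m) * m = a * n / m * m + b * n / m * m := add_mul ..
    _ < a * n + b * n := by omega
    _ = n * m := by rw [← add_mul, hab, mul_comm]

lemma exists_first_mul_div_add_lt (hmn : m.Coprime n) {s : ℕ} (hs : 0 < s) (hsm : s < m) :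
    ∃ K, s + K < m ∧ (∀ j ≤ K, s * n / m + j * n / m = (s + j) * n / m) ∧
      s * n / m + (K + 1) * n / m < (s + K + 1) * n / m := by
  have hlast : s * n / m + (m - s - 1 + 1) * n / m < (s + (m - s - 1) + 1) * n / m := by
    rw [show s + (m - s - 1) + 1 = m by omega, Nat.mul_div_cancel_left n (by omega)]
    exact mul_div_add_mul_div_lt hmn hs (by omega) (by omega)
  have hex : ∃ K, s * n / m + (K + 1) * n / m < (s + K + 1) * n / m := ⟨_, hlast⟩
  refine ⟨Nat.find hex, ?_, fun j hj => ?_, Nat.find_spec hex⟩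
  · have := Nat.find_min' hex hlast
    omega
  · rcases j with _ | i
    · simp
    · have hmin := Nat.find_min hex (m := i) (by omega)
      have := mul_div_add_mul_div_le (m := m) (n := n) s (i + 1)
      rw [← add_assoc] at this ⊢
      omega

end Floor

def exponents (κ : ℕ → ℕ) (m : ℕ) : List ℕ := (range' 1 m).map κ

def tweakedExponents (κ : ℕ → ℕ) (m r : ℕ) : List ℕ :=
  (κ r + 1) :: (range' (r + 1) (m - r)).map κ

@[simp] lemma length_exponents (κ : ℕ → ℕ) (m : ℕ) : (exponents κ m).length = m := by
  simp [exponents]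

@[simp] lemma length_tweakedExponents (κ : ℕ → ℕ) (m r : ℕ) :
    (tweakedExponents κ m r).length = m - r + 1 := by
  simp [tweakedExponents]

lemma getElem_exponents (κ : ℕ → ℕ) (m j : ℕ) (h : j < (exponents κ m).length) :
    (exponents κ m)[j] = κ (j + 1) := by
  simp [exponents, add_comm]

lemma getElem_tweakedExponents (κ : ℕ → ℕ) (m r j : ℕ)
    (h : j < (tweakedExponents κ m r).length) :
    (tweakedExponents κ m r)[j] = κ (r + j) + if j = 0 then 1 else 0 := by
  rcases j with _ | j
  · simp [tweakedExponents]
  · simp [tweakedExponents, add_assoc, Nat.add_comm 1 j]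

lemma kappa_succ_add_two {m n : ℕ} {κ : ℕ → ℕ} (hm : 0 < m) (h2 : 2 * m < n)
    (hκ1 : κ 1 = n / m - 1)
    (hκ : ∀ i, 2 ≤ i → i ≤ m → κ i = i * n / m - (i - 1) * n / m - 2) :
    ∀ j < m, κ (j + 1) + 2 + j * n / m = (j + 1) * n / m + if j = 0 then 1 else 0 := by
  have hnm : 2 ≤ n / m := (Nat.le_div_iff_mul_le hm).2 (by omega)
  intro j hj
  rcases j with _ | i
  · simp only [zero_add, one_mul, Nat.zero_mul, Nat.zero_div, if_pos]
    omega
  · have hsup := mul_div_add_mul_div_le (m := m) (n := n) (i + 1) 1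
    rw [one_mul] at hsup
    have := hκ (i + 1 + 1) (by omega) (by omega)
    rw [Nat.add_sub_cancel] at this
    simp only [Nat.add_one_ne_zero, if_false]
    omega

lemma exists_disagreeAt_tweakedExponents {m n : ℕ} {κ : ℕ → ℕ} (hm : 0 < m)
    (h2 : 2 * m < n) (hmn : m.Coprime n) (hκ1 : κ 1 = n / m - 1)
    (hκ : ∀ i, 2 ≤ i → i ≤ m → κ i = i * n / m - (i - 1) * n / m - 2)
    {r : ℕ} (hr1 : 1 ≤ r) (hrm : r ≤ m) :
    ∃ t, DisagreeAt (blockWord (tweakedExponents κ m r)) (blockWord (exponents κ m)) t := by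
  rcases hr1.eq_or_lt with rfl | hr
  · refine exists_disagreeAt_blockWord (K := 0) (by simp) (by rw [length_exponents]; omega)
      (by simp) ?_
    simp [getElem_tweakedExponents, getElem_exponents]
  obtain ⟨s, rfl⟩ : ∃ s, r = s + 1 := ⟨r - 1, by omega⟩
  have hgap := kappa_succ_add_two hm h2 hκ1 hκ
  obtain ⟨K, hKm, hadd, hlt⟩ := exists_first_mul_div_add_lt hmn (s := s) (by omega) (by omega)
  refine exists_disagreeAt_blockWord (K := K) (by rw [length_tweakedExponents]; omega)
    (by rw [length_exponents]; omega) (fun j hj => ?_) ?_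
  · rw [getElem_tweakedExponents, getElem_exponents, add_right_comm]
    have hA := hgap (s + j) (by omega)
    have hB := hgap j (by omega)
    have hj0 := hadd j hj.le
    have hj1 := hadd (j + 1) hj
    rw [if_neg (by omega)] at hA
    rw [← add_assoc] at hj1
    omega
  · rw [getElem_tweakedExponents, getElem_exponents, add_right_comm]
    have hA := hgap (s + K) (by omega)
    have hB := hgap K (by omega)
    have hK := hadd K le_rfl
    rw [if_neg (by omega)] at hA
    omega

end TweakDisagree

open TweakDisagree in
/-- the word c = 1 0^{κ_r+1} 1² 0^{κ_{r+1}} 1² ⋯ 1² 0^{κ_m} 1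
disagrees with c_{m/n} = 1 0^{κ₁} 1² 0^{κ₂} 1² ⋯ 1² 0^{κ_m} 1 within the shorter
of their lengths, and at the first disagreement c has symbol 0 while c_{m/n}
has symbol 1 (so c is greater in the unimodal order). -/
theorem tweak_disagree (m n : ℕ) (hm : 0 < m) (h2 : 2 * m < n) (hmn : Nat.Coprime m n)
    (κ : ℕ → ℕ)
    (hκ1 : κ 1 = n / m - 1)
    (hκ : ∀ i, 2 ≤ i → i ≤ m → κ i = i * n / m - (i - 1) * n / m - 2)
    (r : ℕ) (hr1 : 1 ≤ r) (hrm : r ≤ m) :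
    ∃ t : ℕ,
      t < min ((((1 :: (List.replicate (κ r + 1) 0 ++ [1])) ::
            (List.range' (r + 1) (m - r)).map
              (fun i => 1 :: (List.replicate (κ i) 0 ++ [1]))).flatten).length)
          ((((List.range' 1 m).map
              (fun i => 1 :: (List.replicate (κ i) 0 ++ [1]))).flatten).length) ∧
      (∀ j, j < t →
        (((1 :: (List.replicate (κ r + 1) 0 ++ [1])) ::
            (List.range' (r + 1) (m - r)).map
              (fun i => 1 :: (List.replicate (κ i) 0 ++ [1]))).flatten).getD j 0 =
        ((((List.range' 1 m).map
              (fun i => 1 :: (List.replicate (κ i) 0 ++ [1]))).flatten)).getD j 0) ∧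
      (((1 :: (List.replicate (κ r + 1) 0 ++ [1])) ::
          (List.range' (r + 1) (m - r)).map
            (fun i => 1 :: (List.replicate (κ i) 0 ++ [1]))).flatten).getD t 0 = 0 ∧
      ((((List.range' 1 m).map
            (fun i => 1 :: (List.replicate (κ i) 0 ++ [1]))).flatten)).getD t 0 = 1 := by
  obtain ⟨t, ht⟩ := exists_disagreeAt_tweakedExponents hm h2 hmn hκ1 hκ hr1 hrm
  exact ⟨t, by simpa only [DisagreeAt, blockWord, tweakedExponents, exponents, List.map_cons,
    List.map_map, Function.comp_def, block] using ht⟩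
end
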